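/- arXiv:2406.15628 — 5 statements merged into one kernel-verified Lean document; each statement's English description precedes it below -/
import Mathlib

section
/- Let n ≥ 2 and let q(z) = b_m z^m + ⋯ + b_1 z and p(w) = w^n + a_{n−1} w^{n−1} + ⋯ + a_1 w + a_0 be complex polynomials, where m = deg q satisfies m ≤ n − 2. Then the set of solutions z ∈ ℂ of the harmonic equation q(z) + p(conj z) = 0 is finite, and it has at most n² − 1 elements if (n−1)·a_{n−1}² − 2n·a_{n−2} = 0, and at most n² − 2 elements otherwise. -/
open Complex Finset Matrix

noncomputable section HarmAux

/-- basis index -/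
abbrev HIdx (n : ℕ) := Fin n × Fin n

/-- indicator vector of the monomial z^i z̄^j (zero if out of range) -/
def hee (n i j : ℕ) : HIdx n → ℂ := fun p => if p.1.1 = i ∧ p.2.1 = j then 1 else 0

/-- representative vector of z̄^s -/
def huu (n m : ℕ) (a b : ℕ → ℂ) : ℕ → HIdx n → ℂ := fun s =>
  if s < n then hee n 0 s
  else (-∑ r ∈ (Finset.range n).attach, a r.1 • huu n m a b (s - n + r.1)) -
    ∑ l ∈ Finset.Icc 1 m, b l • hee n l (s - n)
  termination_by s => s
  decreasing_by
    have := Finset.mem_range.mp r.2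
    omega

/-- representative vector of z^s -/
def hvv (n m : ℕ) (a b : ℕ → ℂ) : ℕ → HIdx n → ℂ := fun s =>
  if s < n then hee n s 0
  else (-∑ k ∈ (Finset.range n).attach, (starRingEnd ℂ) (a k.1) • hvv n m a b (s - n + k.1)) -
    ∑ l ∈ Finset.Icc 1 m, (starRingEnd ℂ) (b l) • hee n (s - n) l
  termination_by s => s
  decreasing_by
    have := Finset.mem_range.mp k.2
    omega

/-- column of the multiplication-by-z operator -/
def hZc (n m : ℕ) (a b : ℕ → ℂ) (q : HIdx n) : HIdx n → ℂ :=
  if q.1.1 + 1 < n then hee n (q.1.1 + 1) q.2.1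
  else (-∑ k ∈ Finset.range n, (starRingEnd ℂ) (a k) • hee n k q.2.1) -
    ∑ l ∈ Finset.Icc 1 m, (starRingEnd ℂ) (b l) • huu n m a b (q.2.1 + l)

/-- column of the multiplication-by-z̄ operator -/
def hZc' (n m : ℕ) (a b : ℕ → ℂ) (q : HIdx n) : HIdx n → ℂ :=
  if q.2.1 + 1 < n then hee n q.1.1 (q.2.1 + 1)
  else (-∑ r ∈ Finset.range n, (a r) • hee n q.1.1 r) -
    ∑ l ∈ Finset.Icc 1 m, (b l) • hvv n m a b (q.1.1 + l)

/-- eigen-functional coordinate vector -/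
def hww (n : ℕ) (z : ℂ) : HIdx n → ℂ := fun p => z ^ (p.1 : ℕ) * (starRingEnd ℂ z) ^ (p.2 : ℕ)

/-- evaluation pairing -/
def hphi (n : ℕ) (z : ℂ) (y : HIdx n → ℂ) : ℂ := ∑ p : HIdx n, y p * hww n z p


variable {n m : ℕ} {a b : ℕ → ℂ}

lemma hee_apply (i j : ℕ) (p : HIdx n) :
    hee n i j p = if p.1.1 = i ∧ p.2.1 = j then 1 else 0 := rfl

lemma hee_self (i : Fin n) (j : Fin n) : hee n i.1 j.1 (i, j) = 1 := by
  simp [hee_apply]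

lemma hee_ne_zero {i j : ℕ} {p : HIdx n} (h : hee n i j p ≠ 0) :
    p.1.1 = i ∧ p.2.1 = j := by
  by_contra hc
  exact h (by simp [hee_apply, hc])

/-- U1 : components of `huu` have z-index ≤ m -/
lemma huu_eq_zero1 (a b : ℕ → ℂ) (s : ℕ) (p : HIdx n) (hp : m < p.1.1) :
    huu n m a b s p = 0 := by
  induction s using Nat.strong_induction_on with
  | _ s ih =>
    rw [huu]
    split
    · have h1 : ¬ (p.1.1 = 0 ∧ p.2.1 = s) := by omega
      simp [hee_apply, h1]
    · rename_i hs
      have h2 : ∀ r ∈ (Finset.range n).attach,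
          a r.1 • huu n m a b (s - n + r.1) p = 0 := by
        intro r _
        have hr := Finset.mem_range.mp r.2
        rw [ih (s - n + r.1) (by omega)]
        simp
      have h3 : ∀ l ∈ Finset.Icc 1 m, b l • hee n l (s - n) p = 0 := by
        intro l hl
        have hl' := Finset.mem_Icc.mp hl
        have : ¬ (p.1.1 = l ∧ p.2.1 = s - n) := by omega
        simp [hee_apply, this]
      simp only [Pi.sub_apply, Pi.neg_apply, Finset.sum_apply, Pi.smul_apply]
      rw [Finset.sum_congr rfl h2, Finset.sum_congr rfl h3]
      simp

/-- V1 : components of `hvv` have z̄-index ≤ m -/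
lemma hvv_eq_zero1 (a b : ℕ → ℂ) (s : ℕ) (p : HIdx n) (hp : m < p.2.1) :
    hvv n m a b s p = 0 := by
  induction s using Nat.strong_induction_on with
  | _ s ih =>
    rw [hvv]
    split
    · have h1 : ¬ (p.1.1 = s ∧ p.2.1 = 0) := by omega
      simp [hee_apply, h1]
    · rename_i hs
      have h2 : ∀ k ∈ (Finset.range n).attach,
          (starRingEnd ℂ) (a k.1) • hvv n m a b (s - n + k.1) p = 0 := by
        intro k _
        have hk := Finset.mem_range.mp k.2
        rw [ih (s - n + k.1) (by omega)]
        simp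
      have h3 : ∀ l ∈ Finset.Icc 1 m, (starRingEnd ℂ) (b l) • hee n (s - n) l p = 0 := by
        intro l hl
        have hl' := Finset.mem_Icc.mp hl
        have : ¬ (p.1.1 = s - n ∧ p.2.1 = l) := by omega
        simp [hee_apply, this]
      simp only [Pi.sub_apply, Pi.neg_apply, Finset.sum_apply, Pi.smul_apply]
      rw [Finset.sum_congr rfl h2, Finset.sum_congr rfl h3]
      simp

/-- U2 : low components of `huu` with positive z-index have small z̄-index -/
lemma huu_eq_zero2 (a b : ℕ → ℂ) (s : ℕ) (p : HIdx n) (hs : s + 3 ≤ 2 * n)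
    (h1 : 1 ≤ p.1.1) (h2 : n ≤ p.2.1 + 2) : huu n m a b s p = 0 := by
  induction s using Nat.strong_induction_on with
  | _ s ih =>
    rw [huu]
    split
    · have hc : ¬ (p.1.1 = 0 ∧ p.2.1 = s) := by omega
      simp [hee_apply, hc]
    · rename_i hsn
      have h2' : ∀ r ∈ (Finset.range n).attach,
          a r.1 • huu n m a b (s - n + r.1) p = 0 := by
        intro r _
        have hr := Finset.mem_range.mp r.2
        rw [ih (s - n + r.1) (by omega) (by omega)]
        simp
      have h3 : ∀ l ∈ Finset.Icc 1 m, b l • hee n l (s - n) p = 0 := by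
        intro l hl
        have hl' := Finset.mem_Icc.mp hl
        have : ¬ (p.1.1 = l ∧ p.2.1 = s - n) := by omega
        simp [hee_apply, this]
      simp only [Pi.sub_apply, Pi.neg_apply, Finset.sum_apply, Pi.smul_apply]
      rw [Finset.sum_congr rfl h2', Finset.sum_congr rfl h3]
      simp


section Eval

variable {z : ℂ}

lemma hphi_ee (z : ℂ) {i j : ℕ} (hi : i < n) (hj : j < n) :
    hphi n z (hee n i j) = z ^ i * (starRingEnd ℂ z) ^ j := by
  unfold hphi
  rw [Finset.sum_eq_single ((⟨i, hi⟩ : Fin n), (⟨j, hj⟩ : Fin n))]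
  · simp [hee_apply, hww]
  · intro q _ hq
    rw [hee_apply]
    split
    · rename_i hcond
      exact absurd (Prod.ext (Fin.ext hcond.1) (Fin.ext hcond.2)) hq
    · simp
  · intro h
    exact absurd (Finset.mem_univ _) h

lemma hphi_sub (x y : HIdx n → ℂ) : hphi n z (x - y) = hphi n z x - hphi n z y := by
  simp [hphi, sub_mul, Finset.sum_sub_distrib]

lemma hphi_neg (x : HIdx n → ℂ) : hphi n z (-x) = -hphi n z x := by
  simp [hphi, neg_mul]

lemma hphi_finsum {ι : Type*} (s : Finset ι) (f : ι → HIdx n → ℂ) :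
    hphi n z (∑ i ∈ s, f i) = ∑ i ∈ s, hphi n z (f i) := by
  simp only [hphi, Finset.sum_apply, Finset.sum_mul]
  rw [Finset.sum_comm]

lemma hphi_smul (c : ℂ) (x : HIdx n → ℂ) : hphi n z (c • x) = c * hphi n z x := by
  simp [hphi, smul_eq_mul, mul_assoc, Finset.mul_sum]

/-- the defining relation of `S` (rearranged) -/
def relA (n m : ℕ) (a b : ℕ → ℂ) (z : ℂ) : Prop :=
  (starRingEnd ℂ z) ^ n =
    (-∑ r ∈ Finset.range n, a r * (starRingEnd ℂ z) ^ r) - ∑ l ∈ Finset.Icc 1 m, b l * z ^ l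

/-- the conjugated relation -/
def relB (n m : ℕ) (a b : ℕ → ℂ) (z : ℂ) : Prop :=
  z ^ n = (-∑ k ∈ Finset.range n, (starRingEnd ℂ) (a k) * z ^ k) -
    ∑ l ∈ Finset.Icc 1 m, (starRingEnd ℂ) (b l) * (starRingEnd ℂ z) ^ l

lemma relB_of_relA (h : relA n m a b z) : relB n m a b z := by
  unfold relA at h
  unfold relB
  have := congrArg (starRingEnd ℂ) h
  simpa [map_sub, map_neg, map_sum, _root_.map_mul, map_pow] using this

lemma hphi_uu (hn : 2 ≤ n) (hm : m + 2 ≤ n) (hA : relA n m a b z) (s : ℕ) (hs : s < 2 * n) :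
    hphi n z (huu n m a b s) = (starRingEnd ℂ z) ^ s := by
  induction s using Nat.strong_induction_on with
  | _ s ih =>
    rw [huu]
    split
    · rename_i hsn
      rw [hphi_ee z (by omega) hsn]
      simp
    · rename_i hsn
      push_neg at hsn
      rw [hphi_sub, hphi_neg, hphi_finsum, hphi_finsum]
      have e1 : ∀ r ∈ (Finset.range n).attach,
          hphi n z (a r.1 • huu n m a b (s - n + r.1)) =
            a r.1 * ((starRingEnd ℂ z) ^ (s - n) * (starRingEnd ℂ z) ^ r.1) := by
        intro r _
        have hr := Finset.mem_range.mp r.2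
        rw [hphi_smul, ih (s - n + r.1) (by omega) (by omega), ← pow_add]
      have e2 : ∀ l ∈ Finset.Icc 1 m,
          hphi n z (b l • hee n l (s - n)) =
            b l * (z ^ l * (starRingEnd ℂ z) ^ (s - n)) := by
        intro l hl
        have hl' := Finset.mem_Icc.mp hl
        have hmn : m ≤ n - 2 ∨ True := Or.inr trivial
        rw [hphi_smul, hphi_ee z (by omega) (by omega)]
      rw [Finset.sum_congr rfl e1, Finset.sum_congr rfl e2]
      rw [Finset.sum_attach (Finset.range n)
        (fun r => a r * ((starRingEnd ℂ z) ^ (s - n) * (starRingEnd ℂ z) ^ r))]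
      have factor1 : ∑ r ∈ Finset.range n,
          a r * ((starRingEnd ℂ z) ^ (s - n) * (starRingEnd ℂ z) ^ r) =
          (starRingEnd ℂ z) ^ (s - n) * ∑ r ∈ Finset.range n, a r * (starRingEnd ℂ z) ^ r := by
        rw [Finset.mul_sum]
        exact Finset.sum_congr rfl fun r _ => by ring
      have factor2 : ∑ l ∈ Finset.Icc 1 m, b l * (z ^ l * (starRingEnd ℂ z) ^ (s - n)) =
          (starRingEnd ℂ z) ^ (s - n) * ∑ l ∈ Finset.Icc 1 m, b l * z ^ l := by
        rw [Finset.mul_sum]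
        exact Finset.sum_congr rfl fun l _ => by ring
      rw [factor1, factor2]
      have : (starRingEnd ℂ z) ^ s =
          (starRingEnd ℂ z) ^ (s - n) * (starRingEnd ℂ z) ^ n := by
        rw [← pow_add]
        congr 1
        omega
      rw [this, hA]
      ring

lemma hphi_vv (hn : 2 ≤ n) (hm : m + 2 ≤ n) (hB : relB n m a b z) (s : ℕ) (hs : s < 2 * n) :
    hphi n z (hvv n m a b s) = z ^ s := by
  induction s using Nat.strong_induction_on with
  | _ s ih =>
    rw [hvv]
    split
    · rename_i hsn
      rw [hphi_ee z hsn (by omega)]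
      simp
    · rename_i hsn
      push_neg at hsn
      rw [hphi_sub, hphi_neg, hphi_finsum, hphi_finsum]
      have e1 : ∀ k ∈ (Finset.range n).attach,
          hphi n z ((starRingEnd ℂ) (a k.1) • hvv n m a b (s - n + k.1)) =
            (starRingEnd ℂ) (a k.1) * (z ^ (s - n) * z ^ k.1) := by
        intro k _
        have hk := Finset.mem_range.mp k.2
        rw [hphi_smul, ih (s - n + k.1) (by omega) (by omega), ← pow_add]
      have e2 : ∀ l ∈ Finset.Icc 1 m,
          hphi n z ((starRingEnd ℂ) (b l) • hee n (s - n) l) =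
            (starRingEnd ℂ) (b l) * (z ^ (s - n) * (starRingEnd ℂ z) ^ l) := by
        intro l hl
        have hl' := Finset.mem_Icc.mp hl
        rw [hphi_smul, hphi_ee z (by omega) (by omega)]
      rw [Finset.sum_congr rfl e1, Finset.sum_congr rfl e2]
      rw [Finset.sum_attach (Finset.range n)
        (fun k => (starRingEnd ℂ) (a k) * (z ^ (s - n) * z ^ k))]
      have factor1 : ∑ k ∈ Finset.range n, (starRingEnd ℂ) (a k) * (z ^ (s - n) * z ^ k) =
          z ^ (s - n) * ∑ k ∈ Finset.range n, (starRingEnd ℂ) (a k) * z ^ k := by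
        rw [Finset.mul_sum]
        exact Finset.sum_congr rfl fun k _ => by ring
      have factor2 : ∑ l ∈ Finset.Icc 1 m,
          (starRingEnd ℂ) (b l) * (z ^ (s - n) * (starRingEnd ℂ z) ^ l) =
          z ^ (s - n) * ∑ l ∈ Finset.Icc 1 m, (starRingEnd ℂ) (b l) * (starRingEnd ℂ z) ^ l := by
        rw [Finset.mul_sum]
        exact Finset.sum_congr rfl fun l _ => by ring
      rw [factor1, factor2]
      have : z ^ s = z ^ (s - n) * z ^ n := by
        rw [← pow_add]
        congr 1
        omega
      rw [this, hB]
      ring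


lemma hphi_Zc (hn : 2 ≤ n) (hm : m + 2 ≤ n) (hA : relA n m a b z) (q : HIdx n) :
    hphi n z (hZc n m a b q) = z * hww n z q := by
  have hB := relB_of_relA hA
  unfold hZc
  split
  · rename_i hq
    rw [hphi_ee z hq q.2.isLt, pow_succ]
    unfold hww
    ring
  · rename_i hq
    push_neg at hq
    have hq1 : q.1.1 + 1 = n := by
      have := q.1.isLt
      omega
    rw [hphi_sub, hphi_neg, hphi_finsum, hphi_finsum]
    have e1 : ∀ k ∈ Finset.range n,
        hphi n z ((starRingEnd ℂ) (a k) • hee n k q.2.1) =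
          (starRingEnd ℂ) (a k) * z ^ k * (starRingEnd ℂ z) ^ q.2.1 := by
      intro k hk0
      have hk := Finset.mem_range.mp hk0
      rw [hphi_smul, hphi_ee z hk q.2.isLt]
      ring
    have e2 : ∀ l ∈ Finset.Icc 1 m,
        hphi n z ((starRingEnd ℂ) (b l) • huu n m a b (q.2.1 + l)) =
          (starRingEnd ℂ) (b l) * (starRingEnd ℂ z) ^ l * (starRingEnd ℂ z) ^ q.2.1 := by
      intro l hl
      have hl' := Finset.mem_Icc.mp hl
      have hq2 := q.2.isLt
      rw [hphi_smul, hphi_uu hn hm hA (q.2.1 + l) (by omega), pow_add]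
      ring
    rw [Finset.sum_congr rfl e1, Finset.sum_congr rfl e2]
    have factor : ∀ (w : ℂ),
        (-∑ k ∈ Finset.range n, (starRingEnd ℂ) (a k) * z ^ k * w) -
          ∑ l ∈ Finset.Icc 1 m, (starRingEnd ℂ) (b l) * (starRingEnd ℂ z) ^ l * w =
        ((-∑ k ∈ Finset.range n, (starRingEnd ℂ) (a k) * z ^ k) -
          ∑ l ∈ Finset.Icc 1 m, (starRingEnd ℂ) (b l) * (starRingEnd ℂ z) ^ l) * w := by
      intro w
      rw [sub_mul, neg_mul, Finset.sum_mul, Finset.sum_mul]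
    rw [factor, ← hB]
    have : z ^ n = z * z ^ q.1.1 := by
      rw [← pow_succ']
      congr 1
      omega
    rw [this]
    unfold hww
    ring

lemma hphi_Zc' (hn : 2 ≤ n) (hm : m + 2 ≤ n) (hA : relA n m a b z) (q : HIdx n) :
    hphi n z (hZc' n m a b q) = (starRingEnd ℂ z) * hww n z q := by
  have hB := relB_of_relA hA
  unfold hZc'
  split
  · rename_i hq
    rw [hphi_ee z q.1.isLt hq, pow_succ]
    unfold hww
    ring
  · rename_i hq
    push_neg at hq
    have hq1 : q.2.1 + 1 = n := by
      have := q.2.isLt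
      omega
    rw [hphi_sub, hphi_neg, hphi_finsum, hphi_finsum]
    have e1 : ∀ r ∈ Finset.range n,
        hphi n z ((a r) • hee n q.1.1 r) =
          a r * (starRingEnd ℂ z) ^ r * z ^ q.1.1 := by
      intro r hr0
      have hr := Finset.mem_range.mp hr0
      rw [hphi_smul, hphi_ee z q.1.isLt hr]
      ring
    have e2 : ∀ l ∈ Finset.Icc 1 m,
        hphi n z ((b l) • hvv n m a b (q.1.1 + l)) =
          b l * z ^ l * z ^ q.1.1 := by
      intro l hl
      have hl' := Finset.mem_Icc.mp hl
      have hq2 := q.1.isLt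
      rw [hphi_smul, hphi_vv hn hm hB (q.1.1 + l) (by omega), pow_add]
      ring
    rw [Finset.sum_congr rfl e1, Finset.sum_congr rfl e2]
    have factor : ∀ (w : ℂ),
        (-∑ r ∈ Finset.range n, a r * (starRingEnd ℂ z) ^ r * w) -
          ∑ l ∈ Finset.Icc 1 m, b l * z ^ l * w =
        ((-∑ r ∈ Finset.range n, a r * (starRingEnd ℂ z) ^ r) -
          ∑ l ∈ Finset.Icc 1 m, b l * z ^ l) * w := by
      intro w
      rw [sub_mul, neg_mul, Finset.sum_mul, Finset.sum_mul]
    rw [factor, ← hA]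
    have : (starRingEnd ℂ z) ^ n = (starRingEnd ℂ z) * (starRingEnd ℂ z) ^ q.2.1 := by
      rw [← pow_succ']
      congr 1
      omega
    rw [this]
    unfold hww
    ring

end Eval


/-- matrix of multiplication by z -/
def hMM (n m : ℕ) (a b : ℕ → ℂ) : Matrix (HIdx n) (HIdx n) ℂ := fun p q => hZc n m a b q p

/-- matrix of multiplication by z̄ -/
def hMM' (n m : ℕ) (a b : ℕ → ℂ) : Matrix (HIdx n) (HIdx n) ℂ := fun p q => hZc' n m a b q p

lemma hMM_eigen {z : ℂ} (hn : 2 ≤ n) (hm : m + 2 ≤ n) (hA : relA n m a b z) :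
    (hMM n m a b)ᵀ *ᵥ hww n z = z • hww n z := by
  funext q
  have : ((hMM n m a b)ᵀ *ᵥ hww n z) q = hphi n z (hZc n m a b q) := by
    simp [Matrix.mulVec, dotProduct, Matrix.transpose_apply, hMM, hphi]
  rw [this, hphi_Zc hn hm hA q]
  simp

lemma hMM'_eigen {z : ℂ} (hn : 2 ≤ n) (hm : m + 2 ≤ n) (hA : relA n m a b z) :
    (hMM' n m a b)ᵀ *ᵥ hww n z = (starRingEnd ℂ z) • hww n z := by
  funext q
  have : ((hMM' n m a b)ᵀ *ᵥ hww n z) q = hphi n z (hZc' n m a b q) := by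
    simp [Matrix.mulVec, dotProduct, Matrix.transpose_apply, hMM', hphi]
  rw [this, hphi_Zc' hn hm hA q]
  simp


section Trace

/-- generic pairing -/
def hpr (n : ℕ) (F y : HIdx n → ℂ) : ℂ := ∑ q : HIdx n, y q * F q

lemma hpr_ee (F : HIdx n → ℂ) {i j : ℕ} (hi : i < n) (hj : j < n) :
    hpr n F (hee n i j) = F ((⟨i, hi⟩ : Fin n), (⟨j, hj⟩ : Fin n)) := by
  unfold hpr
  rw [Finset.sum_eq_single ((⟨i, hi⟩ : Fin n), (⟨j, hj⟩ : Fin n))]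
  · simp [hee_apply]
  · intro q _ hq
    rw [hee_apply]
    split
    · rename_i hcond
      exact absurd (Prod.ext (Fin.ext hcond.1) (Fin.ext hcond.2)) hq
    · simp
  · intro h
    exact absurd (Finset.mem_univ _) h

lemma hpr_sub (F x y : HIdx n → ℂ) : hpr n F (x - y) = hpr n F x - hpr n F y := by
  simp [hpr, sub_mul, Finset.sum_sub_distrib]

lemma hpr_neg (F x : HIdx n → ℂ) : hpr n F (-x) = -hpr n F x := by
  simp [hpr, neg_mul]

lemma hpr_finsum {ι : Type*} (F : HIdx n → ℂ) (s : Finset ι) (f : ι → HIdx n → ℂ) :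
    hpr n F (∑ i ∈ s, f i) = ∑ i ∈ s, hpr n F (f i) := by
  simp only [hpr, Finset.sum_apply, Finset.sum_mul]
  rw [Finset.sum_comm]

lemma hpr_smul (F : HIdx n → ℂ) (c : ℂ) (x : HIdx n → ℂ) :
    hpr n F (c • x) = c * hpr n F x := by
  simp [hpr, smul_eq_mul, mul_assoc, Finset.mul_sum]

/-- diagonal entries of M -/
lemma hZc_diag (hn : 2 ≤ n) (hm : m + 2 ≤ n) (p : HIdx n) :
    hZc n m a b p p = if p.1.1 = n - 1 then -((starRingEnd ℂ) (a (n - 1))) else 0 := by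
  unfold hZc
  split
  · rename_i hp
    have h1 : ¬ (p.1.1 = p.1.1 + 1 ∧ p.2.1 = p.2.1) := by omega
    have h2 : ¬ (p.1.1 = n - 1) := by omega
    simp [hee_apply, h1, h2]
  · rename_i hp
    push_neg at hp
    have hp1 : p.1.1 = n - 1 := by
      have := p.1.isLt
      omega
    simp only [Pi.sub_apply, Pi.neg_apply, Finset.sum_apply, Pi.smul_apply, smul_eq_mul]
    have e1 : ∑ k ∈ Finset.range n, (starRingEnd ℂ) (a k) * hee n k p.2.1 p =
        (starRingEnd ℂ) (a (n - 1)) := by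
      rw [Finset.sum_eq_single (n - 1)]
      · have : p.1.1 = n - 1 ∧ p.2.1 = p.2.1 := ⟨hp1, rfl⟩
        simp [hee_apply, this]
      · intro k _ hk
        have : ¬ (p.1.1 = k) := by omega
        simp [hee_apply, this]
      · intro h
        exact absurd (Finset.mem_range.mpr (by omega)) h
    have e2 : ∀ l ∈ Finset.Icc 1 m,
        (starRingEnd ℂ) (b l) * huu n m a b (p.2.1 + l) p = 0 := by
      intro l hl
      rw [huu_eq_zero1 a b _ p (by omega)]
      simp
    rw [e1, Finset.sum_congr rfl e2]
    simp [hp1]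

/-- diagonal entries of M' -/
lemma hZc'_diag (hn : 2 ≤ n) (hm : m + 2 ≤ n) (p : HIdx n) :
    hZc' n m a b p p = if p.2.1 = n - 1 then -(a (n - 1)) else 0 := by
  unfold hZc'
  split
  · rename_i hp
    have h1 : ¬ (p.1.1 = p.1.1 ∧ p.2.1 = p.2.1 + 1) := by omega
    have h2 : ¬ (p.2.1 = n - 1) := by omega
    simp [hee_apply, h1, h2]
  · rename_i hp
    push_neg at hp
    have hp1 : p.2.1 = n - 1 := by
      have := p.2.isLt
      omega
    simp only [Pi.sub_apply, Pi.neg_apply, Finset.sum_apply, Pi.smul_apply, smul_eq_mul]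
    have e1 : ∑ r ∈ Finset.range n, a r * hee n p.1.1 r p = a (n - 1) := by
      rw [Finset.sum_eq_single (n - 1)]
      · have : p.1.1 = p.1.1 ∧ p.2.1 = n - 1 := ⟨rfl, hp1⟩
        simp [hee_apply, this]
      · intro r _ hr
        have : ¬ (p.2.1 = r) := by omega
        simp [hee_apply, this]
      · intro h
        exact absurd (Finset.mem_range.mpr (by omega)) h
    have e2 : ∀ l ∈ Finset.Icc 1 m,
        (b l) * hvv n m a b (p.1.1 + l) p = 0 := by
      intro l hl
      rw [hvv_eq_zero1 a b _ p (by omega)]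
      simp
    rw [e1, Finset.sum_congr rfl e2]
    simp [hp1]

lemma htraceM (hn : 2 ≤ n) (hm : m + 2 ≤ n) :
    Matrix.trace (hMM n m a b) = -((n : ℂ) * (starRingEnd ℂ) (a (n - 1))) := by
  unfold Matrix.trace
  have step : ∀ p : HIdx n, Matrix.diag (hMM n m a b) p =
      if p.1.1 = n - 1 then -((starRingEnd ℂ) (a (n - 1))) else 0 := by
    intro p
    exact hZc_diag hn hm p
  rw [Finset.sum_congr rfl (fun p _ => step p)]
  rw [Fintype.sum_prod_type]
  have inner : ∀ i : Fin n, (∑ j : Fin n,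
      if (i : ℕ) = n - 1 then -((starRingEnd ℂ) (a (n - 1))) else 0) =
      if i = (⟨n - 1, by omega⟩ : Fin n) then (n : ℂ) * -((starRingEnd ℂ) (a (n - 1))) else 0 := by
    intro i
    by_cases hi : (i : ℕ) = n - 1
    · have : i = (⟨n - 1, by omega⟩ : Fin n) := Fin.ext hi
      simp [hi, this, Finset.sum_const, Fintype.card_fin, mul_comm]
    · have : ¬ i = (⟨n - 1, by omega⟩ : Fin n) := fun h => hi (by rw [h])
      simp [hi, this]
  rw [Finset.sum_congr rfl (fun i _ => inner i)]
  rw [Finset.sum_ite_eq' Finset.univ (⟨n - 1, by omega⟩ : Fin n)]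
  simp

lemma htraceM' (hn : 2 ≤ n) (hm : m + 2 ≤ n) :
    Matrix.trace (hMM' n m a b) = -((n : ℂ) * (a (n - 1))) := by
  unfold Matrix.trace
  have step : ∀ p : HIdx n, Matrix.diag (hMM' n m a b) p =
      if p.2.1 = n - 1 then -(a (n - 1)) else 0 := by
    intro p
    exact hZc'_diag hn hm p
  rw [Finset.sum_congr rfl (fun p _ => step p)]
  rw [Fintype.sum_prod_type]
  have inner : ∀ i : Fin n, (∑ j : Fin n,
      if (j : ℕ) = n - 1 then -(a (n - 1)) else 0) = -(a (n - 1)) := by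
    intro i
    have e : ∀ j : Fin n, (if (j : ℕ) = n - 1 then -(a (n - 1)) else 0) =
        if j = (⟨n - 1, by omega⟩ : Fin n) then -(a (n - 1)) else 0 := by
      intro j
      by_cases hj : (j : ℕ) = n - 1
      · have hj' : j = (⟨n - 1, by omega⟩ : Fin n) := Fin.ext hj
        simp [hj, hj']
      · have : ¬ j = (⟨n - 1, by omega⟩ : Fin n) := fun h => hj (by rw [h])
        simp [hj, this]
    rw [Finset.sum_congr rfl (fun j _ => e j), Finset.sum_ite_eq' Finset.univ]
    simp
  rw [Finset.sum_congr rfl (fun i _ => inner i)]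
  simp [Finset.sum_const, Fintype.card_fin, mul_comm]


lemma hvv_small {s : ℕ} (a b : ℕ → ℂ) (hs : s < n) : hvv n m a b s = hee n s 0 := by
  rw [hvv]
  simp [hs]

/-- the column entry of M needed repeatedly:  `hZc (q₁,q₂) p` for `p.2 = n-1`, `q₂ ≤ m` -/
lemma hZc_at_highcol (hn : 2 ≤ n) (hm : m + 2 ≤ n) (q : HIdx n) (p : HIdx n)
    (hp2 : p.2.1 = n - 1) (hq2 : q.2.1 ≤ m) (hp1 : 1 ≤ p.1.1) :
    hZc n m a b q p = 0 := by
  unfold hZc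
  split
  · rename_i hk
    have : ¬ (p.1.1 = q.1.1 + 1 ∧ p.2.1 = q.2.1) := by omega
    simp [hee_apply, this]
  · rename_i hk
    simp only [Pi.sub_apply, Pi.neg_apply, Finset.sum_apply, Pi.smul_apply, smul_eq_mul]
    have e1 : ∀ k' ∈ Finset.range n,
        (starRingEnd ℂ) (a k') * hee n k' q.2.1 p = 0 := by
      intro k' _
      have : ¬ (p.1.1 = k' ∧ p.2.1 = q.2.1) := by omega
      simp [hee_apply, this]
    have e2 : ∀ l₃ ∈ Finset.Icc 1 m,
        (starRingEnd ℂ) (b l₃) * huu n m a b (q.2.1 + l₃) p = 0 := by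
      intro l₃ hl₃
      have hl₃' := Finset.mem_Icc.mp hl₃
      rw [huu_eq_zero2 a b (q.2.1 + l₃) p (by omega) hp1 (by omega)]
      simp
    rw [Finset.sum_congr rfl e1, Finset.sum_congr rfl e2]
    simp

/-- value of `hZc (p.1, r) p` -/
lemma hZc_val1 (hn : 2 ≤ n) (hm : m + 2 ≤ n) (p : HIdx n) (r : Fin n) :
    hZc n m a b (p.1, r) p =
      if p.1.1 = n - 1 ∧ p.2.1 = r.1 then -((starRingEnd ℂ) (a (n - 1))) else 0 := by
  unfold hZc
  split
  · rename_i hk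
    simp only at hk
    have h1 : ¬ (p.1.1 = p.1.1 + 1 ∧ p.2.1 = r.1) := by omega
    have h2 : ¬ (p.1.1 = n - 1 ∧ p.2.1 = r.1) := by
      intro hx
      omega
    simp [hee_apply, h1, h2]
  · rename_i hk
    simp only at hk
    push_neg at hk
    have hp1 : p.1.1 = n - 1 := by
      have := p.1.isLt
      omega
    simp only [Pi.sub_apply, Pi.neg_apply, Finset.sum_apply, Pi.smul_apply, smul_eq_mul]
    have e2 : ∀ l₃ ∈ Finset.Icc 1 m,
        (starRingEnd ℂ) (b l₃) * huu n m a b (r.1 + l₃) p = 0 := by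
      intro l₃ _
      rw [huu_eq_zero1 a b _ p (by omega)]
      simp
    rw [Finset.sum_congr rfl e2]
    by_cases hr : p.2.1 = r.1
    · have e1 : ∑ k ∈ Finset.range n, (starRingEnd ℂ) (a k) * hee n k r.1 p =
          (starRingEnd ℂ) (a (n - 1)) := by
        rw [Finset.sum_eq_single (n - 1)]
        · have hc : p.1.1 = n - 1 ∧ p.2.1 = r.1 := ⟨hp1, hr⟩
          simp [hee_apply, hc]
        · intro k _ hkk
          have : ¬ (p.1.1 = k) := by omega
          simp [hee_apply, this]
        · intro h
          exact absurd (Finset.mem_range.mpr (by omega)) h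
      rw [e1]
      have hc : p.1.1 = n - 1 ∧ p.2.1 = r.1 := ⟨hp1, hr⟩
      simp [hc]
    · have e1 : ∀ k ∈ Finset.range n, (starRingEnd ℂ) (a k) * hee n k r.1 p = 0 := by
        intro k _
        have : ¬ (p.1.1 = k ∧ p.2.1 = r.1) := by
          intro hc
          exact hr hc.2
        simp [hee_apply, this]
      rw [Finset.sum_congr rfl e1]
      have : ¬ (p.1.1 = n - 1 ∧ p.2.1 = r.1) := by
        intro hc
        exact hr hc.2
      simp [this]

/-- key vanishing: terms with hvv do not contribute to the diagonal -/
lemma hvv_term_zero (hn : 2 ≤ n) (hm : m + 2 ≤ n) (p : HIdx n) (hp2 : p.2.1 = n - 1)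
    {l : ℕ} (hl : l ∈ Finset.Icc 1 m) (q : HIdx n) :
    hvv n m a b (p.1.1 + l) q * hZc n m a b q p = 0 := by
  have hl' := Finset.mem_Icc.mp hl
  by_cases hq2 : m < q.2.1
  · rw [hvv_eq_zero1 a b _ q hq2, zero_mul]
  · push_neg at hq2
    by_cases hp1 : 1 ≤ p.1.1
    · rw [hZc_at_highcol hn hm q p hp2 hq2 hp1, mul_zero]
    · push_neg at hp1
      interval_cases hvalue : p.1.1
      · -- p.1.1 = 0 : kill the hvv factor
        by_cases hk : q.1.1 + 1 < n
        · -- then hZc q p = hee (q.1+1) q.2 at p: needs p.2 = q.2 ≤ m < n-1 : zero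
          unfold hZc
          rw [if_pos hk]
          have : ¬ (p.1.1 = q.1.1 + 1 ∧ p.2.1 = q.2.1) := by omega
          simp [hee_apply, this]
        · -- q.1.1 = n - 1 : hvv l q = hee l 0 q = 0 since q.1.1 = n-1 ≠ l
          have hvv0 : hvv n m a b (0 + l) q = 0 := by
            rw [zero_add, hvv_small a b (by omega)]
            have : ¬ (q.1.1 = l ∧ q.2.1 = 0) := by omega
            simp [hee_apply, this]
          rw [hvalue] at *
          rw [hvv0, zero_mul]

lemma htraceMM' (hn : 2 ≤ n) (hm : m + 2 ≤ n) :
    Matrix.trace (hMM n m a b * hMM' n m a b) =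
      a (n - 1) * (starRingEnd ℂ) (a (n - 1)) := by
  have diag : ∀ p : HIdx n, (hMM n m a b * hMM' n m a b) p p =
      if p.1.1 = n - 1 ∧ p.2.1 = n - 1 then a (n - 1) * (starRingEnd ℂ) (a (n - 1)) else 0 := by
    intro p
    rw [Matrix.mul_apply]
    have reorder : ∀ q : HIdx n, hMM n m a b p q * hMM' n m a b q p =
        hZc' n m a b p q * hZc n m a b q p := by
      intro q
      unfold hMM hMM'
      ring
    rw [Finset.sum_congr rfl (fun q _ => reorder q)]
    have key : (∑ q : HIdx n, hZc' n m a b p q * hZc n m a b q p) =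
        hpr n (fun q => hZc n m a b q p) (hZc' n m a b p) := rfl
    rw [key]
    unfold hZc'
    split
    · rename_i hp2
      rw [hpr_ee _ p.1.isLt hp2]
      have hne : ¬ (p.2.1 = n - 1) := by omega
      have : hZc n m a b ((⟨p.1.1, p.1.isLt⟩ : Fin n), (⟨p.2.1 + 1, hp2⟩ : Fin n)) p = 0 := by
        have hfix : ((⟨p.1.1, p.1.isLt⟩ : Fin n), (⟨p.2.1 + 1, hp2⟩ : Fin n)).1 = p.1 := by
          exact Fin.ext rfl
        rw [show ((⟨p.1.1, p.1.isLt⟩ : Fin n) : Fin n) = p.1 from Fin.ext rfl]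
        rw [hZc_val1 hn hm p ⟨p.2.1 + 1, hp2⟩]
        have : ¬ (p.1.1 = n - 1 ∧ p.2.1 = ((⟨p.2.1 + 1, hp2⟩ : Fin n) : Fin n).1) := by
          simp only
          omega
        simp only [this, if_false]
      rw [this]
      simp [hne]
    · rename_i hp2'
      push_neg at hp2'
      have hp2 : p.2.1 = n - 1 := by
        have := p.2.isLt
        omega
      rw [hpr_sub, hpr_neg, hpr_finsum, hpr_finsum]
      have e1 : ∀ r ∈ Finset.range n,
          hpr n (fun q => hZc n m a b q p) (a r • hee n p.1.1 r) =
            a r * (if p.1.1 = n - 1 ∧ p.2.1 = r then -((starRingEnd ℂ) (a (n - 1))) else 0) := by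
        intro r hr0
        have hr := Finset.mem_range.mp hr0
        rw [hpr_smul, hpr_ee _ p.1.isLt hr]
        congr 1
        have hfst : ((⟨p.1.1, p.1.isLt⟩ : Fin n) : Fin n) = p.1 := Fin.ext rfl
        rw [hfst, hZc_val1 hn hm p ⟨r, hr⟩]
      have e2 : ∀ l ∈ Finset.Icc 1 m,
          hpr n (fun q => hZc n m a b q p) (b l • hvv n m a b (p.1.1 + l)) = 0 := by
        intro l hl
        rw [hpr_smul]
        have : hpr n (fun q => hZc n m a b q p) (hvv n m a b (p.1.1 + l)) = 0 := by
          unfold hpr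
          rw [Finset.sum_congr rfl (fun q _ => hvv_term_zero hn hm p hp2 hl q)]
          simp
        rw [this]
        simp
      rw [Finset.sum_congr rfl e1, Finset.sum_congr rfl e2]
      rw [Finset.sum_eq_single (n - 1)]
      · by_cases hc : p.1.1 = n - 1 ∧ p.2.1 = n - 1
        · rw [if_pos hc, if_pos hc]
          simp only [Finset.sum_const_zero]
          ring
        · rw [if_neg hc, if_neg hc]
          simp only [Finset.sum_const_zero]
          ring
      · intro r _ hrr
        have : ¬ (p.1.1 = n - 1 ∧ p.2.1 = r) := by omega
        rw [if_neg this]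
        simp
      · intro h
        exact absurd (Finset.mem_range.mpr (by omega)) h
  unfold Matrix.trace
  have step : ∀ p : HIdx n, Matrix.diag (hMM n m a b * hMM' n m a b) p =
      if p = ((⟨n - 1, by omega⟩ : Fin n), (⟨n - 1, by omega⟩ : Fin n)) then
        a (n - 1) * (starRingEnd ℂ) (a (n - 1)) else 0 := by
    intro p
    rw [Matrix.diag_apply, diag p]
    by_cases hc : p.1.1 = n - 1 ∧ p.2.1 = n - 1
    · have : p = ((⟨n - 1, by omega⟩ : Fin n), (⟨n - 1, by omega⟩ : Fin n)) :=
        Prod.ext (Fin.ext hc.1) (Fin.ext hc.2)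
      simp [hc, this]
    · have : ¬ p = ((⟨n - 1, by omega⟩ : Fin n), (⟨n - 1, by omega⟩ : Fin n)) := by
        intro hx
        exact hc ⟨by rw [hx], by rw [hx]⟩
      simp [hc, this]
  rw [Finset.sum_congr rfl (fun p _ => step p)]
  rw [Finset.sum_ite_eq' Finset.univ]
  simp

end Trace


section Main

lemma htrace_mulVecLin {ι : Type*} [Fintype ι] [DecidableEq ι] (A : Matrix ι ι ℂ) :
    LinearMap.trace ℂ (ι → ℂ) (A.mulVecLin) = A.trace := by
  rw [← Matrix.toLin'_apply']
  rw [LinearMap.trace_eq_matrix_trace ℂ (Pi.basisFun ℂ ι), LinearMap.toMatrix_eq_toMatrix',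
    LinearMap.toMatrix'_toLin']

/-- The key counting lemma: no `n²-1` distinct solutions. -/
lemma hkey (hn : 2 ≤ n) (hm : m + 2 ≤ n) (t : Finset ℂ)
    (hrelt : ∀ z ∈ t, relA n m a b z) (hcard : t.card = n ^ 2 - 1) : False := by
  classical
  set T : (HIdx n → ℂ) →ₗ[ℂ] (HIdx n → ℂ) := ((hMM n m a b)ᵀ).mulVecLin with hT
  set T' : (HIdx n → ℂ) →ₗ[ℂ] (HIdx n → ℂ) := ((hMM' n m a b)ᵀ).mulVecLin with hT'
  have hTw : ∀ z ∈ t, T (hww n z) = z • hww n z := by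
    intro z hz
    rw [hT, Matrix.mulVecLin_apply]
    exact hMM_eigen hn hm (hrelt z hz)
  have hT'w : ∀ z ∈ t, T' (hww n z) = (starRingEnd ℂ z) • hww n z := by
    intro z hz
    rw [hT', Matrix.mulVecLin_apply]
    exact hMM'_eigen hn hm (hrelt z hz)
  have hw0 : ∀ z : ℂ, hww n z ≠ 0 := by
    intro z h
    have h0 : (0 : ℕ) < n := by omega
    have := congrFun h ((⟨0, h0⟩ : Fin n), (⟨0, h0⟩ : Fin n))
    simp [hww] at this
  have hli : LinearIndependent ℂ (fun z : {x // x ∈ t} => hww n z.1) := by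
    apply Module.End.eigenvectors_linearIndependent' (T : Module.End ℂ (HIdx n → ℂ))
      (fun z : {x // x ∈ t} => (z.1 : ℂ)) (fun x y h => Subtype.ext h)
    intro z
    exact ⟨Module.End.mem_eigenspace_iff.mpr (hTw z.1 z.2), hw0 z.1⟩
  have hfinrk : Module.finrank ℂ (HIdx n → ℂ) = n ^ 2 := by
    rw [Module.finrank_pi]
    rw [Fintype.card_prod, Fintype.card_fin]
    ring
  have hn2 : 4 ≤ n ^ 2 := by nlinarith
  have hspan : Submodule.span ℂ (Set.range (fun z : {x // x ∈ t} => hww n z.1)) ≠ ⊤ := by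
    intro htop
    have h1 := finrank_span_eq_card hli
    rw [htop, finrank_top, hfinrk, Fintype.card_coe, hcard] at h1
    omega
  obtain ⟨y₀, hy₀⟩ : ∃ y₀, y₀ ∉ Submodule.span ℂ
      (Set.range (fun z : {x // x ∈ t} => hww n z.1)) := by
    by_contra hcon
    push_neg at hcon
    exact hspan (Submodule.eq_top_iff'.mpr hcon)
  have hli2 : LinearIndependent ℂ
      (fun o : Option {x // x ∈ t} => Option.casesOn' o y₀ (fun z => hww n z.1)) :=
    hli.option hy₀
  have hcard2 : Fintype.card (Option {x // x ∈ t}) = Module.finrank ℂ (HIdx n → ℂ) := by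
    rw [Fintype.card_option, Fintype.card_coe, hcard, hfinrk]
    omega
  set B : Module.Basis (Option {x // x ∈ t}) ℂ (HIdx n → ℂ) :=
    basisOfLinearIndependentOfCardEqFinrank hli2 hcard2 with hBdef
  have hB : ∀ o, B o = Option.casesOn' o y₀ (fun z => hww n z.1) := by
    intro o
    rw [hBdef, coe_basisOfLinearIndependentOfCardEqFinrank]
  have hBnone : B none = y₀ := hB none
  have hBsome : ∀ z : {x // x ∈ t}, B (some z) = hww n z.1 := fun z => hB (some z)
  have traceform : ∀ f : (HIdx n → ℂ) →ₗ[ℂ] (HIdx n → ℂ),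
      LinearMap.trace ℂ (HIdx n → ℂ) f = ∑ o : Option {x // x ∈ t}, (B.repr (f (B o))) o := by
    intro f
    rw [LinearMap.trace_eq_matrix_trace ℂ B f]
    unfold Matrix.trace
    exact Finset.sum_congr rfl fun o _ => by rw [Matrix.diag_apply, LinearMap.toMatrix_apply]
  set lam : ℂ := (B.repr (T y₀)) none with hlam
  set mu : ℂ := (B.repr (T' y₀)) none with hmu
  have hdT : ∀ z : {x // x ∈ t}, (B.repr (T (B (some z)))) (some z) = z.1 := by
    intro z
    rw [hBsome z, hTw z.1 z.2, ← hBsome z, _root_.map_smul, Finsupp.smul_apply, B.repr_self,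
      Finsupp.single_eq_same, smul_eq_mul, mul_one]
  have hdT' : ∀ z : {x // x ∈ t}, (B.repr (T' (B (some z)))) (some z) = (starRingEnd ℂ) z.1 := by
    intro z
    rw [hBsome z, hT'w z.1 z.2, ← hBsome z, _root_.map_smul, Finsupp.smul_apply, B.repr_self,
      Finsupp.single_eq_same, smul_eq_mul, mul_one]
  have hdTnone : ∀ z : {x // x ∈ t}, (B.repr (T (B (some z)))) none = 0 := by
    intro z
    rw [hBsome z, hTw z.1 z.2, ← hBsome z, _root_.map_smul, Finsupp.smul_apply, B.repr_self,
      Finsupp.single_eq_of_ne (by simp), smul_zero]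
  have hdC : ∀ z : {x // x ∈ t},
      (B.repr (T (T' (B (some z))))) (some z) = z.1 * (starRingEnd ℂ) z.1 := by
    intro z
    rw [hBsome z, hT'w z.1 z.2, _root_.map_smul, hTw z.1 z.2, smul_smul, ← hBsome z, _root_.map_smul,
      Finsupp.smul_apply, B.repr_self, Finsupp.single_eq_same, smul_eq_mul, mul_one, mul_comm]
  have hdCnone : (B.repr (T (T' (B none)))) none = mu * lam := by
    rw [hBnone]
    have expand : T (T' y₀) = ∑ o : Option {x // x ∈ t}, (B.repr (T' y₀)) o • T (B o) := by
      conv_lhs => rw [← B.sum_repr (T' y₀)]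
      rw [map_sum]
      exact Finset.sum_congr rfl fun o _ => by rw [_root_.map_smul]
    rw [expand, map_sum, Finsupp.finset_sum_apply]
    have e : ∀ o : Option {x // x ∈ t},
        (B.repr ((B.repr (T' y₀)) o • T (B o))) none =
          (B.repr (T' y₀)) o * (B.repr (T (B o))) none := by
      intro o
      rw [_root_.map_smul, Finsupp.smul_apply, smul_eq_mul]
    rw [Finset.sum_congr rfl fun o _ => e o]
    rw [Fintype.sum_option]
    have e2 : ∀ z : {x // x ∈ t},
        (B.repr (T' y₀)) (some z) * (B.repr (T (B (some z)))) none = 0 := by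
      intro z
      rw [hdTnone z, mul_zero]
    rw [Finset.sum_congr rfl fun z _ => e2 z]
    rw [hBnone]
    simp [hlam, hmu]
  -- the three trace equations
  have eqT : lam + (∑ z ∈ t, z) = -((n : ℂ) * (starRingEnd ℂ) (a (n - 1))) := by
    have h2 : LinearMap.trace ℂ (HIdx n → ℂ) T = -((n : ℂ) * (starRingEnd ℂ) (a (n - 1))) := by
      rw [hT, htrace_mulVecLin, Matrix.trace_transpose, htraceM hn hm]
    have h1 := traceform T
    rw [Fintype.sum_option, hBnone] at h1
    have h3 : ∑ z : {x // x ∈ t}, (B.repr (T (B (some z)))) (some z) = ∑ z ∈ t, z := by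
      rw [Finset.sum_congr rfl fun z _ => hdT z]
      exact Finset.sum_coe_sort t (fun z => z)
    rw [h3, h2] at h1
    exact h1.symm
  have eqT' : mu + (∑ z ∈ t, (starRingEnd ℂ) z) = -((n : ℂ) * (a (n - 1))) := by
    have h2 : LinearMap.trace ℂ (HIdx n → ℂ) T' = -((n : ℂ) * (a (n - 1))) := by
      rw [hT', htrace_mulVecLin, Matrix.trace_transpose, htraceM' hn hm]
    have h1 := traceform T'
    rw [Fintype.sum_option, hBnone] at h1
    have h3 : ∑ z : {x // x ∈ t}, (B.repr (T' (B (some z)))) (some z) =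
        ∑ z ∈ t, (starRingEnd ℂ) z := by
      rw [Finset.sum_congr rfl fun z _ => hdT' z]
      exact Finset.sum_coe_sort t (fun z => (starRingEnd ℂ) z)
    rw [h3, h2] at h1
    exact h1.symm
  have eqC : mu * lam + (∑ z ∈ t, z * (starRingEnd ℂ) z) =
      a (n - 1) * (starRingEnd ℂ) (a (n - 1)) := by
    have hcomp : T ∘ₗ T' = ((hMM n m a b)ᵀ * (hMM' n m a b)ᵀ).mulVecLin := by
      rw [hT, hT', Matrix.mulVecLin_mul]
    have h2 : LinearMap.trace ℂ (HIdx n → ℂ) (T ∘ₗ T') =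
        a (n - 1) * (starRingEnd ℂ) (a (n - 1)) := by
      rw [hcomp, htrace_mulVecLin, ← Matrix.transpose_mul, Matrix.trace_transpose,
        Matrix.trace_mul_comm, htraceMM' hn hm]
    have h1 := traceform (T ∘ₗ T')
    rw [Fintype.sum_option] at h1
    have h3 : ∀ o : Option {x // x ∈ t}, (T ∘ₗ T') (B o) = T (T' (B o)) := by
      intro o
      rw [LinearMap.comp_apply]
    rw [h3 none, hdCnone] at h1
    have h4 : ∑ z : {x // x ∈ t}, (B.repr ((T ∘ₗ T') (B (some z)))) (some z) =
        ∑ z ∈ t, z * (starRingEnd ℂ) z := by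
      rw [Finset.sum_congr rfl fun z _ => by rw [h3 (some z), hdC z]]
      exact Finset.sum_coe_sort t (fun z => z * (starRingEnd ℂ) z)
    rw [h4, h2] at h1
    exact h1.symm
  have eqMu : mu = (starRingEnd ℂ) lam := by
    have hcj := congrArg (starRingEnd ℂ) eqT
    rw [map_add, map_sum, map_neg, _root_.map_mul, map_natCast, Complex.conj_conj] at hcj
    have := eqT'.trans hcj.symm
    exact add_right_cancel this
  -- Final numerical contradiction via Cauchy–Schwarz
  set A1 := a (n - 1) with hA1
  set Sz := ∑ z ∈ t, z with hSzdef
  set P := ∑ z ∈ t, z * (starRingEnd ℂ) z with hPdef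
  set N : ℕ := n ^ 2 - 1 with hNdef
  have hNcast : (N : ℂ) = (n : ℂ) ^ 2 - 1 := by
    rw [hNdef]
    push_cast [Nat.cast_sub (by omega : 1 ≤ n ^ 2)]
    ring
  have hNne : (N : ℂ) ≠ 0 := by
    rw [hNdef]
    exact_mod_cast Nat.cast_ne_zero.mpr (show n ^ 2 - 1 ≠ 0 by omega)
  have hdist : ∃ z₀ ∈ t, (N : ℂ) * z₀ - Sz ≠ 0 := by
    have h2c : 1 < t.card := by
      rw [hcard]
      omega
    obtain ⟨z₁, h1, z₂, h2, hne⟩ := Finset.one_lt_card.mp h2c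
    by_contra hcon
    push_neg at hcon
    have e1 := hcon z₁ h1
    have e2 := hcon z₂ h2
    have : (N : ℂ) * z₁ = (N : ℂ) * z₂ := by
      have e1' : (N : ℂ) * z₁ = Sz := by linear_combination e1
      have e2' : (N : ℂ) * z₂ = Sz := by linear_combination e2
      rw [e1', e2']
    exact hne (mul_left_cancel₀ hNne this)
  have hsum_pos : 0 < ∑ z ∈ t, Complex.normSq ((N : ℂ) * z - Sz) := by
    obtain ⟨z₀, hz₀, hne⟩ := hdist
    exact Finset.sum_pos' (fun z _ => Complex.normSq_nonneg _)
      ⟨z₀, hz₀, Complex.normSq_pos.mpr hne⟩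
  have hident : ((∑ z ∈ t, Complex.normSq ((N : ℂ) * z - Sz) : ℝ) : ℂ) =
      (N : ℂ) ^ 2 * P - (N : ℂ) * (Sz * (starRingEnd ℂ) Sz) := by
    push_cast
    have e : ∀ z ∈ t, ((Complex.normSq ((N : ℂ) * z - Sz) : ℝ) : ℂ) =
        (N : ℂ) ^ 2 * (z * (starRingEnd ℂ) z) - (N : ℂ) * (z * (starRingEnd ℂ) Sz) -
          ((N : ℂ) * (Sz * (starRingEnd ℂ) z) - Sz * (starRingEnd ℂ) Sz) := by
      intro z _
      rw [← Complex.mul_conj]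
      rw [map_sub, _root_.map_mul, map_natCast]
      ring
    rw [Finset.sum_congr rfl e]
    rw [Finset.sum_sub_distrib, Finset.sum_sub_distrib, Finset.sum_sub_distrib]
    rw [← Finset.mul_sum, ← hPdef]
    have f1 : ∑ z ∈ t, (N : ℂ) * (z * (starRingEnd ℂ) Sz) = (N : ℂ) * (Sz * (starRingEnd ℂ) Sz) := by
      rw [← Finset.mul_sum, ← Finset.sum_mul, ← hSzdef]
    have f2 : ∑ z ∈ t, (N : ℂ) * (Sz * (starRingEnd ℂ) z) = (N : ℂ) * (Sz * (starRingEnd ℂ) Sz) := by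
      rw [← Finset.mul_sum, ← Finset.mul_sum, ← map_sum, ← hSzdef]
    have f3 : ∑ _z ∈ t, Sz * (starRingEnd ℂ) Sz = (N : ℂ) * (Sz * (starRingEnd ℂ) Sz) := by
      rw [Finset.sum_const, hcard, nsmul_eq_mul]
    rw [f1, f2, f3]
    ring
  have hSz : Sz = -((n : ℂ) * (starRingEnd ℂ) A1) - lam := by
    rw [hA1]
    linear_combination eqT
  have hP : P = A1 * (starRingEnd ℂ) A1 - (starRingEnd ℂ) lam * lam := by
    rw [hA1]
    have := eqC
    rw [eqMu] at this
    linear_combination this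
  set w : ℂ := (n : ℂ) * lam + (starRingEnd ℂ) A1 with hwdef
  have hfinal : ((∑ z ∈ t, Complex.normSq ((N : ℂ) * z - Sz) : ℝ) : ℂ) =
      -(N : ℂ) * (w * (starRingEnd ℂ) w) := by
    rw [hident, hSz, hP, hNcast, hwdef]
    rw [map_sub, map_neg, _root_.map_mul, map_natCast, Complex.conj_conj, map_add,
      _root_.map_mul, map_natCast, Complex.conj_conj]
    ring
  rw [Complex.mul_conj] at hfinal
  have hfinal' : (∑ z ∈ t, Complex.normSq ((N : ℂ) * z - Sz)) =
      -((N : ℝ) * Complex.normSq w) := by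
    have : ((∑ z ∈ t, Complex.normSq ((N : ℂ) * z - Sz) : ℝ) : ℂ) =
        ((-((N : ℝ) * Complex.normSq w) : ℝ) : ℂ) := by
      rw [hfinal]
      push_cast
      ring
    exact_mod_cast this
  have hge : (0 : ℝ) ≤ (N : ℝ) * Complex.normSq w :=
    mul_nonneg (Nat.cast_nonneg N) (Complex.normSq_nonneg w)
  rw [hfinal'] at hsum_pos
  linarith

end Main

end HarmAux

/-- **Theorem (root bound for harmonic polynomials, m ≤ n-2).**
For `q(z) = b_m z^m + ⋯ + b_1 z` and `p(w) = w^n + a_{n-1} w^{n-1} + ⋯ + a_0` with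
`2 ≤ n` and `m ≤ n - 2`, the solution set of `q(z) + p(conj z) = 0` is finite, has at most
`n² - 1` elements when `(n-1)·a_{n-1}² - 2n·a_{n-2} = 0`, and at most `n² - 2` otherwise. -/
theorem statement0 (n m : ℕ) (hn : 2 ≤ n) (hm : m ≤ n - 2) (a b : ℕ → ℂ)
    (S : Set ℂ)
    (hS : S = {z : ℂ | (∑ j ∈ Finset.Icc 1 m, b j * z ^ j) +
      ((starRingEnd ℂ z) ^ n + ∑ j ∈ Finset.range n, a j * (starRingEnd ℂ z) ^ j) = 0}) :
    S.Finite ∧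
    (((n : ℂ) - 1) * a (n - 1) ^ 2 - 2 * (n : ℂ) * a (n - 2) = 0 → S.ncard ≤ n ^ 2 - 1) ∧
    (((n : ℂ) - 1) * a (n - 1) ^ 2 - 2 * (n : ℂ) * a (n - 2) ≠ 0 → S.ncard ≤ n ^ 2 - 2) := by
  have hm2 : m + 2 ≤ n := by omega
  have h4 : 4 ≤ n ^ 2 := by nlinarith
  have hrelS : ∀ z ∈ S, relA n m a b z := by
    intro z hz
    rw [hS] at hz
    simp only [Set.mem_setOf_eq] at hz
    unfold relA
    linear_combination hz
  have key : ∀ t : Finset ℂ, ↑t ⊆ S → t.card = n ^ 2 - 1 → False := by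
    intro t hts hc
    exact hkey hn hm2 t (fun z hz => hrelS z (hts hz)) hc
  have hfin : S.Finite := by
    by_contra hinf
    have hinf' : S.Infinite := hinf
    obtain ⟨t, hts, hc⟩ := Set.Infinite.exists_subset_card_eq hinf' (n ^ 2 - 1)
    exact key t hts hc
  have hbound : S.ncard ≤ n ^ 2 - 2 := by
    by_contra hgt
    push_neg at hgt
    have hle : n ^ 2 - 1 ≤ S.ncard := by omega
    obtain ⟨t0, hts0, hc0⟩ := Set.exists_subset_card_eq hle
    have hfin0 : t0.Finite := hfin.subset hts0
    refine key hfin0.toFinset ?_ ?_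
    · simpa using hts0
    · rw [← Set.ncard_eq_toFinset_card t0 hfin0]
      exact hc0
  exact ⟨hfin, fun _ => by omega, fun _ => hbound⟩
end

section
/- Let n ≥ 2 and 1 ≤ m ≤ n − 1, let q(z) = b_m z^m + ⋯ + b_1 z and p(w) = w^n + a_{n−1} w^{n−1} + ⋯ + a_1 w + a_0 be complex polynomials, and set h(z,w) = q(z) + p(w) ∈ ℂ[z,w] and h*(z,w) = q̄(w) + p̄(z), where q̄ and p̄ denote the polynomials with conjugated coefficients. Let Ĩ = ⟨h, h*⟩ ⊆ ℂ[z,w] and A = ℂ[z,w]/Ĩ, and assume that the classes of the monomials z^α w^β with 0 ≤ α, β ≤ n − 1 form a ℂ-basis of A. Then the trace of the multiplication-by-[zw] endomorphism of A equals |a_{n−1}|² + (2n−1)·|b_{n−1}|² if m = n − 1, and equals |a_{n−1}|² if m ≤ n − 2. -/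
open MvPolynomial

lemma aux_repr_zero {ι R M : Type*} [CommRing R] [AddCommGroup M] [Module R M]
    (B : Module.Basis ι R M) (s : Set ι) (i : ι) (hi : i ∉ s) {y : M}
    (hy : y ∈ Submodule.span R (B '' s)) : B.repr y i = 0 := by
  induction hy using Submodule.span_induction with
  | mem x hx =>
    obtain ⟨j, hj, rfl⟩ := hx
    have hji : j ≠ i := fun hij => hi (hij ▸ hj)
    simp [Module.Basis.repr_self, Finsupp.single_apply, hji]
  | zero => simp
  | add x y _ _ hx hy => simp [hx, hy]
  | smul c x _ hx => simp [hx]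

theorem main_aux (n m : ℕ) (hn : 2 ≤ n) (hm1 : 1 ≤ m) (hmn : m ≤ n - 1)
    (a b : ℕ → ℂ) {A : Type*} [CommRing A] [Algebra ℂ A]
    (z w : A)
    (rel1 : w ^ n = -∑ j ∈ Finset.Icc 1 m, b j • z ^ j
      - ∑ j ∈ Finset.range n, a j • w ^ j)
    (rel2 : z ^ n = -∑ j ∈ Finset.Icc 1 m, (starRingEnd ℂ) (b j) • w ^ j
      - ∑ j ∈ Finset.range n, (starRingEnd ℂ) (a j) • z ^ j)
    (B : Module.Basis (Fin n × Fin n) ℂ A)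
    (hB' : ∀ i : Fin n × Fin n, B i = z ^ (i.1 : ℕ) * w ^ (i.2 : ℕ)) :
    LinearMap.trace ℂ A (LinearMap.mulLeft ℂ (z * w)) =
      (Complex.normSq (a (n - 1)) : ℂ) +
        (2 * (n : ℂ) - 1) * (if m + 1 = n then (Complex.normSq (b (n - 1)) : ℂ) else 0) := by
  have hlast : (n : ℕ) - 1 < n := by omega
  obtain ⟨lastF, hlastF⟩ : ∃ lf : Fin n, lf = ⟨n - 1, hlast⟩ := ⟨_, rfl⟩
  have hlastv : (lastF : ℕ) = n - 1 := by rw [hlastF]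
  obtain ⟨cZ, hcZ⟩ : ∃ c : ℂ, c = if m + 1 = n then -((starRingEnd ℂ) (b (n - 1))) else 0 :=
    ⟨_, rfl⟩
  obtain ⟨cW, hcW⟩ : ∃ c : ℂ, c = if m + 1 = n then -(b (n - 1)) else 0 := ⟨_, rfl⟩
  obtain ⟨ZS, hZS⟩ : ∃ S : ℕ → Set (Fin n × Fin n), S = fun t =>
      {p | (p.2 : ℕ) = 0 ∨ (p.1 : ℕ) + n < t ∨ ((p.1 : ℕ) + n = t ∧ (p.2 : ℕ) + 2 ≤ n)} :=
    ⟨_, rfl⟩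
  obtain ⟨WS, hWS⟩ : ∃ S : ℕ → Set (Fin n × Fin n), S = fun t =>
      {p | (p.1 : ℕ) = 0 ∨ (p.2 : ℕ) + n < t ∨ ((p.2 : ℕ) + n = t ∧ (p.1 : ℕ) + 2 ≤ n)} :=
    ⟨_, rfl⟩
  have hZSmem : ∀ (t : ℕ) (p : Fin n × Fin n), p ∈ ZS t ↔
      ((p.2 : ℕ) = 0 ∨ (p.1 : ℕ) + n < t ∨ ((p.1 : ℕ) + n = t ∧ (p.2 : ℕ) + 2 ≤ n)) := by
    intro t p; rw [hZS]; rfl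
  have hWSmem : ∀ (t : ℕ) (p : Fin n × Fin n), p ∈ WS t ↔
      ((p.1 : ℕ) = 0 ∨ (p.2 : ℕ) + n < t ∨ ((p.2 : ℕ) + n = t ∧ (p.1 : ℕ) + 2 ≤ n)) := by
    intro t p; rw [hWS]; rfl
  have hsplit : ∀ (f : ℕ → A),
      ∑ k ∈ Finset.Icc 1 m, f k
        = (if m + 1 = n then f (n - 1) else 0)
          + ∑ k ∈ Finset.Icc 1 m, (if k = n - 1 then 0 else f k) := by
    intro f
    by_cases hm : m + 1 = n
    · have hmem : n - 1 ∈ Finset.Icc 1 m := by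
        rw [Finset.mem_Icc]; omega
      rw [if_pos hm, ← Finset.add_sum_erase _ f hmem]
      congr 1
      rw [show (∑ k ∈ Finset.Icc 1 m, if k = n - 1 then 0 else f k)
          = ∑ k ∈ (Finset.Icc 1 m).erase (n - 1), if k = n - 1 then 0 else f k from
        (Finset.sum_erase _ (by simp)).symm]
      apply Finset.sum_congr rfl
      intro k hk
      rw [if_neg (Finset.ne_of_mem_erase hk)]
    · rw [if_neg hm, zero_add]
      apply Finset.sum_congr rfl
      intro k hk
      rw [Finset.mem_Icc] at hk
      rw [if_neg (by omega)]
  have Zred : ∀ t, n ≤ t → t ≤ 2 * n - 2 → ∀ (h1 : t - n < n),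
      z ^ t - cZ • B (⟨t - n, h1⟩, lastF) ∈ Submodule.span ℂ (B '' ZS t) := by
    intro t
    induction t using Nat.strong_induction_on with
    | _ t IH =>
      intro ht1 ht2 h1
      have hzt : z ^ t = z ^ (t - n) * z ^ n := by
        rw [← pow_add]; congr 1; omega
      have hz : z ^ t = -(∑ k ∈ Finset.Icc 1 m, (starRingEnd ℂ) (b k) • (z ^ (t - n) * w ^ k))
          - ∑ k ∈ Finset.range n, (starRingEnd ℂ) (a k) • z ^ (t - n + k) := by
        rw [hzt, rel2, mul_sub, mul_neg, Finset.mul_sum, Finset.mul_sum]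
        congr 1
        · rw [neg_inj]
          exact Finset.sum_congr rfl fun k _ => mul_smul_comm _ _ _
        · exact Finset.sum_congr rfl fun k _ => by rw [mul_smul_comm, ← pow_add]
      have hs1 : ∑ k ∈ Finset.Icc 1 m, (starRingEnd ℂ) (b k) • (z ^ (t - n) * w ^ k)
          = (-cZ) • B (⟨t - n, h1⟩, lastF)
            + ∑ k ∈ Finset.Icc 1 m,
                (if k = n - 1 then (0:ℂ) else (starRingEnd ℂ) (b k)) • (z ^ (t - n) * w ^ k) := by
        rw [hsplit (fun k => (starRingEnd ℂ) (b k) • (z ^ (t - n) * w ^ k))]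
        congr 1
        · rw [hcZ]
          by_cases hm : m + 1 = n
          · rw [if_pos hm, if_pos hm, neg_neg, hB']
            simp [hlastv]
          · rw [if_neg hm, if_neg hm, neg_zero, zero_smul]
        · exact Finset.sum_congr rfl fun k _ => by split_ifs with hk <;> simp
      have key : z ^ t - cZ • B (⟨t - n, h1⟩, lastF)
          = -(∑ k ∈ Finset.Icc 1 m,
                (if k = n - 1 then (0:ℂ) else (starRingEnd ℂ) (b k)) • (z ^ (t - n) * w ^ k))
            - ∑ k ∈ Finset.range n, (starRingEnd ℂ) (a k) • z ^ (t - n + k) := by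
        rw [hz, hs1, neg_smul]
        abel
      rw [key]
      refine sub_mem (neg_mem (Submodule.sum_mem _ ?_)) (Submodule.sum_mem _ ?_)
      · intro k hk
        rw [Finset.mem_Icc] at hk
        by_cases hk1 : k = n - 1
        · rw [if_pos hk1, zero_smul]; exact zero_mem _
        · rw [if_neg hk1]
          refine Submodule.smul_mem _ _ (Submodule.subset_span ?_)
          refine ⟨(⟨t - n, h1⟩, ⟨k, by omega⟩), ?_, hB' _⟩
          rw [hZSmem]
          exact Or.inr (Or.inr ⟨show t - n + n = t by omega, show k + 2 ≤ n by omega⟩)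
      · intro k hk
        rw [Finset.mem_range] at hk
        refine Submodule.smul_mem _ _ ?_
        by_cases hlt : t - n + k < n
        · have hv : z ^ (t - n + k) = B (⟨t - n + k, hlt⟩, ⟨0, by omega⟩) := by
            rw [hB']; simp
          rw [hv]
          refine Submodule.subset_span ⟨_, ?_, rfl⟩
          rw [hZSmem]
          exact Or.inl rfl
        · have ht' : t - n + k < t := by omega
          have h1' : (t - n + k) - n < n := by omega
          have hmem := IH (t - n + k) ht' (by omega) (by omega) h1'
          have hv : z ^ (t - n + k)
              = (z ^ (t - n + k) - cZ • B (⟨t - n + k - n, h1'⟩, lastF))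
                + cZ • B (⟨t - n + k - n, h1'⟩, lastF) := by abel
          rw [hv]
          refine add_mem (Submodule.span_mono (Set.image_mono ?_) hmem)
            (Submodule.smul_mem _ _ (Submodule.subset_span ⟨_, ?_, rfl⟩))
          · intro p hp
            rw [hZSmem] at hp ⊢
            rcases hp with h' | h' | h'
            · exact Or.inl h'
            · exact Or.inr (Or.inl (by omega))
            · exact Or.inr (Or.inl (by omega))
          · rw [hZSmem]
            exact Or.inr (Or.inl (show t - n + k - n + n < t by omega))
  have Wred : ∀ t, n ≤ t → t ≤ 2 * n - 2 → ∀ (h1 : t - n < n),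
      w ^ t - cW • B (lastF, ⟨t - n, h1⟩) ∈ Submodule.span ℂ (B '' WS t) := by
    intro t
    induction t using Nat.strong_induction_on with
    | _ t IH =>
      intro ht1 ht2 h1
      have hzt : w ^ t = w ^ (t - n) * w ^ n := by
        rw [← pow_add]; congr 1; omega
      have hz : w ^ t = -(∑ k ∈ Finset.Icc 1 m, b k • (z ^ k * w ^ (t - n)))
          - ∑ k ∈ Finset.range n, a k • w ^ (t - n + k) := by
        rw [hzt, rel1, mul_sub, mul_neg, Finset.mul_sum, Finset.mul_sum]
        congr 1
        · rw [neg_inj]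
          exact Finset.sum_congr rfl fun k _ => by rw [mul_smul_comm, mul_comm]
        · exact Finset.sum_congr rfl fun k _ => by rw [mul_smul_comm, ← pow_add]
      have hs1 : ∑ k ∈ Finset.Icc 1 m, b k • (z ^ k * w ^ (t - n))
          = (-cW) • B (lastF, ⟨t - n, h1⟩)
            + ∑ k ∈ Finset.Icc 1 m,
                (if k = n - 1 then (0:ℂ) else b k) • (z ^ k * w ^ (t - n)) := by
        rw [hsplit (fun k => b k • (z ^ k * w ^ (t - n)))]
        congr 1
        · rw [hcW]
          by_cases hm : m + 1 = n
          · rw [if_pos hm, if_pos hm, neg_neg, hB']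
            simp [hlastv]
          · rw [if_neg hm, if_neg hm, neg_zero, zero_smul]
        · exact Finset.sum_congr rfl fun k _ => by split_ifs with hk <;> simp
      have key : w ^ t - cW • B (lastF, ⟨t - n, h1⟩)
          = -(∑ k ∈ Finset.Icc 1 m,
                (if k = n - 1 then (0:ℂ) else b k) • (z ^ k * w ^ (t - n)))
            - ∑ k ∈ Finset.range n, a k • w ^ (t - n + k) := by
        rw [hz, hs1, neg_smul]
        abel
      rw [key]
      refine sub_mem (neg_mem (Submodule.sum_mem _ ?_)) (Submodule.sum_mem _ ?_)
      · intro k hk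
        rw [Finset.mem_Icc] at hk
        by_cases hk1 : k = n - 1
        · rw [if_pos hk1, zero_smul]; exact zero_mem _
        · rw [if_neg hk1]
          refine Submodule.smul_mem _ _ (Submodule.subset_span ?_)
          refine ⟨(⟨k, by omega⟩, ⟨t - n, h1⟩), ?_, hB' _⟩
          rw [hWSmem]
          exact Or.inr (Or.inr ⟨show t - n + n = t by omega, show k + 2 ≤ n by omega⟩)
      · intro k hk
        rw [Finset.mem_range] at hk
        refine Submodule.smul_mem _ _ ?_
        by_cases hlt : t - n + k < n
        · have hv : w ^ (t - n + k) = B (⟨0, by omega⟩, ⟨t - n + k, hlt⟩) := by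
            rw [hB']; simp
          rw [hv]
          refine Submodule.subset_span ⟨_, ?_, rfl⟩
          rw [hWSmem]
          exact Or.inl rfl
        · have ht' : t - n + k < t := by omega
          have h1' : (t - n + k) - n < n := by omega
          have hmem := IH (t - n + k) ht' (by omega) (by omega) h1'
          have hv : w ^ (t - n + k)
              = (w ^ (t - n + k) - cW • B (lastF, ⟨t - n + k - n, h1'⟩))
                + cW • B (lastF, ⟨t - n + k - n, h1'⟩) := by abel
          rw [hv]
          refine add_mem (Submodule.span_mono (Set.image_mono ?_) hmem)
            (Submodule.smul_mem _ _ (Submodule.subset_span ⟨_, ?_, rfl⟩))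
          · intro p hp
            rw [hWSmem] at hp ⊢
            rcases hp with h' | h' | h'
            · exact Or.inl h'
            · exact Or.inr (Or.inl (by omega))
            · exact Or.inr (Or.inl (by omega))
          · rw [hWSmem]
            exact Or.inr (Or.inl (show t - n + k - n + n < t by omega))
  have hZSmem2 : ∀ (t i1 i2 : ℕ) (hi1 : i1 < n) (hi2 : i2 < n),
      ((⟨i1, hi1⟩, ⟨i2, hi2⟩) : Fin n × Fin n) ∈ ZS t ↔
        (i2 = 0 ∨ i1 + n < t ∨ (i1 + n = t ∧ i2 + 2 ≤ n)) := by
    intro t i1 i2 hi1 hi2; rw [hZS]; rfl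
  have hWSmem2 : ∀ (t i1 i2 : ℕ) (hi1 : i1 < n) (hi2 : i2 < n),
      ((⟨i1, hi1⟩, ⟨i2, hi2⟩) : Fin n × Fin n) ∈ WS t ↔
        (i1 = 0 ∨ i2 + n < t ∨ (i2 + n = t ∧ i1 + 2 ≤ n)) := by
    intro t i1 i2 hi1 hi2; rw [hWS]; rfl
  obtain ⟨ℓ, hℓ⟩ : ∃ L : (Fin n × Fin n) → (A →ₗ[ℂ] ℂ),
      ∀ i y, L i y = B.repr y i :=
    ⟨fun i => (Finsupp.lapply i).comp (B.repr : A →ₗ[ℂ] (Fin n × Fin n →₀ ℂ)),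
      fun _ _ => rfl⟩
  have hℓB : ∀ i j, ℓ i (B j) = if j = i then 1 else 0 := by
    intro i j
    rw [hℓ, Module.Basis.repr_self, Finsupp.single_apply]
  have hℓspan : ∀ (i : Fin n × Fin n) (s : Set (Fin n × Fin n)), i ∉ s →
      ∀ y ∈ Submodule.span ℂ (B '' s), ℓ i y = 0 := by
    intro i s hi y hy
    rw [hℓ]
    exact aux_repr_zero B s i hi hy
  have hℓB2 : ∀ (i1 i2 : ℕ) (hi1 : i1 < n) (hi2 : i2 < n) (γ δ : ℕ) (hγ : γ < n) (hδ : δ < n),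
      ℓ (⟨i1, hi1⟩, ⟨i2, hi2⟩) (z ^ γ * w ^ δ) = if γ = i1 ∧ δ = i2 then 1 else 0 := by
    intro i1 i2 hi1 hi2 γ δ hγ hδ
    rw [show z ^ γ * w ^ δ = B (⟨γ, hγ⟩, ⟨δ, hδ⟩) from (hB' (⟨γ, hγ⟩, ⟨δ, hδ⟩)).symm, hℓB]
    simp only [Prod.mk.injEq, Fin.mk.injEq]
  have hℓz : ∀ (i1 i2 : ℕ) (hi1 : i1 < n) (hi2 : i2 < n), i2 = n - 1 → ∀ (t : ℕ),
      t ≤ 2 * n - 2 → t ≤ i1 + n →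
      ℓ (⟨i1, hi1⟩, ⟨i2, hi2⟩) (z ^ t) = if i1 + n = t then cZ else 0 := by
    intro i1 i2 hi1 hi2 hi2v t ht2 hti
    by_cases htn : t < n
    · have hv : ℓ (⟨i1, hi1⟩, ⟨i2, hi2⟩) (z ^ t)
          = if t = i1 ∧ 0 = i2 then 1 else 0 := by
        rw [show z ^ t = z ^ t * w ^ 0 by rw [pow_zero, mul_one]]
        exact hℓB2 i1 i2 hi1 hi2 t 0 htn (by omega)
      rw [hv, if_neg (by omega), if_neg (by omega)]
    · have h1 : t - n < n := by omega
      have hmem := Zred t (by omega) ht2 h1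
      have h0 : ℓ (⟨i1, hi1⟩, ⟨i2, hi2⟩) (z ^ t - cZ • B (⟨t - n, h1⟩, lastF)) = 0 := by
        refine hℓspan _ _ ?_ _ hmem
        rw [hZSmem2]
        push_neg
        exact ⟨by omega, by omega, fun _ => by omega⟩
      have hsum : z ^ t = (z ^ t - cZ • B (⟨t - n, h1⟩, lastF))
          + cZ • B (⟨t - n, h1⟩, lastF) := by abel
      rw [hsum, map_add, h0, zero_add, map_smul, hℓB, smul_eq_mul]
      simp only [hlastF, Prod.mk.injEq, Fin.mk.injEq]
      by_cases hc : i1 + n = t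
      · rw [if_pos ⟨by omega, by omega⟩, if_pos hc, mul_one]
      · rw [if_neg (by omega), if_neg hc, mul_zero]
  have hℓw : ∀ (i1 i2 : ℕ) (hi1 : i1 < n) (hi2 : i2 < n), i1 = n - 1 → ∀ (t : ℕ),
      t ≤ 2 * n - 2 → t ≤ i2 + n →
      ℓ (⟨i1, hi1⟩, ⟨i2, hi2⟩) (w ^ t) = if i2 + n = t then cW else 0 := by
    intro i1 i2 hi1 hi2 hi1v t ht2 hti
    by_cases htn : t < n
    · have hv : ℓ (⟨i1, hi1⟩, ⟨i2, hi2⟩) (w ^ t)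
          = if 0 = i1 ∧ t = i2 then 1 else 0 := by
        rw [show w ^ t = z ^ 0 * w ^ t by rw [pow_zero, one_mul]]
        exact hℓB2 i1 i2 hi1 hi2 0 t (by omega) htn
      rw [hv, if_neg (by omega), if_neg (by omega)]
    · have h1 : t - n < n := by omega
      have hmem := Wred t (by omega) ht2 h1
      have h0 : ℓ (⟨i1, hi1⟩, ⟨i2, hi2⟩) (w ^ t - cW • B (lastF, ⟨t - n, h1⟩)) = 0 := by
        refine hℓspan _ _ ?_ _ hmem
        rw [hWSmem2]
        push_neg
        exact ⟨by omega, by omega, fun _ => by omega⟩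
      have hsum : w ^ t = (w ^ t - cW • B (lastF, ⟨t - n, h1⟩))
          + cW • B (lastF, ⟨t - n, h1⟩) := by abel
      rw [hsum, map_add, h0, zero_add, map_smul, hℓB, smul_eq_mul]
      simp only [hlastF, Prod.mk.injEq, Fin.mk.injEq]
      by_cases hc : i2 + n = t
      · rw [if_pos ⟨by omega, by omega⟩, if_pos hc, mul_one]
      · rw [if_neg (by omega), if_neg hc, mul_zero]
  obtain ⟨Ca, hCa⟩ : ∃ c : ℂ, c = (Complex.normSq (a (n - 1)) : ℂ) := ⟨_, rfl⟩
  obtain ⟨Cb, hCb⟩ : ∃ c : ℂ, c = if m + 1 = n then (Complex.normSq (b (n - 1)) : ℂ) else 0 :=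
    ⟨_, rfl⟩
  have hIccsum : ∀ (f : ℕ → ℂ), ∑ k ∈ Finset.Icc 1 m, (if k = n - 1 then f k else 0)
      = if m + 1 = n then f (n - 1) else 0 := by
    intro f
    rw [Finset.sum_ite_eq' (Finset.Icc 1 m) (n - 1) f]
    by_cases hmc : m + 1 = n
    · rw [if_pos (by rw [Finset.mem_Icc]; omega), if_pos hmc]
    · rw [if_neg (by rw [Finset.mem_Icc]; omega), if_neg hmc]
  have hrangesum : ∀ (f : ℕ → ℂ), ∑ k ∈ Finset.range n, (if k = n - 1 then f k else 0)
      = f (n - 1) := by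
    intro f
    rw [Finset.sum_ite_eq' (Finset.range n) (n - 1) f,
      if_pos (by rw [Finset.mem_range]; omega)]
  have hprod : ∀ (s t : Finset ℕ) (c d : ℕ → ℂ) (x y : ℕ → A),
      (∑ k ∈ s, c k • x k) * (∑ l ∈ t, d l • y l)
        = ∑ k ∈ s, ∑ l ∈ t, (c k * d l) • (x k * y l) := by
    intro s t c d x y
    rw [Finset.sum_mul_sum]
    refine Finset.sum_congr rfl fun k _ => Finset.sum_congr rfl fun l _ => ?_
    rw [smul_mul_assoc, mul_smul_comm, smul_smul]
  have lsum2 : ∀ (i : Fin n × Fin n) (s t : Finset ℕ) (c : ℕ → ℕ → ℂ) (v : ℕ → ℕ → A),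
      ℓ i (∑ k ∈ s, ∑ l ∈ t, c k l • v k l) = ∑ k ∈ s, ∑ l ∈ t, c k l * ℓ i (v k l) := by
    intro i s t c v
    rw [map_sum]
    refine Finset.sum_congr rfl fun k _ => ?_
    rw [map_sum]
    refine Finset.sum_congr rfl fun l _ => ?_
    rw [map_smul, smul_eq_mul]
  have hconj : ∀ c : ℂ, (starRingEnd ℂ) c * c = (Complex.normSq c : ℂ) := fun c => by
    rw [mul_comm, Complex.mul_conj]
  have diag : ∀ (i1 i2 : ℕ) (hi1 : i1 < n) (hi2 : i2 < n),
      ℓ (⟨i1, hi1⟩, ⟨i2, hi2⟩) ((z * w) * B (⟨i1, hi1⟩, ⟨i2, hi2⟩))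
        = (if i1 = n - 1 then (if i2 = n - 1 then Ca + Cb else Cb)
            else (if i2 = n - 1 then Cb else 0)) := by
    intro i1 i2 hi1 hi2
    have hmul : (z * w) * B (⟨i1, hi1⟩, ⟨i2, hi2⟩) = z ^ (i1 + 1) * w ^ (i2 + 1) := by
      rw [show B (⟨i1, hi1⟩, ⟨i2, hi2⟩) = z ^ i1 * w ^ i2 from hB' _]
      ring
    by_cases h1c : i1 + 1 = n
    · have hi1v : i1 = n - 1 := by omega
      subst hi1v
      by_cases h2c : i2 + 1 = n
      · -- corner case : ℓ (z^n * w^n)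
        have hi2v : i2 = n - 1 := by omega
        subst hi2v
        rw [hmul, show n - 1 + 1 = n by omega]
        have hx : z ^ n * w ^ n =
            (∑ k ∈ Finset.Icc 1 m, (starRingEnd ℂ) (b k) • w ^ k)
              * (∑ l ∈ Finset.Icc 1 m, b l • z ^ l)
          + ((∑ k ∈ Finset.Icc 1 m, (starRingEnd ℂ) (b k) • w ^ k)
              * (∑ l ∈ Finset.range n, a l • w ^ l)
          + ((∑ k ∈ Finset.range n, (starRingEnd ℂ) (a k) • z ^ k)
              * (∑ l ∈ Finset.Icc 1 m, b l • z ^ l)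
          + (∑ k ∈ Finset.range n, (starRingEnd ℂ) (a k) • z ^ k)
              * (∑ l ∈ Finset.range n, a l • w ^ l))) := by
          rw [rel1, rel2]; ring
        rw [hx, map_add, map_add, map_add]
        have e11 : ℓ (⟨n - 1, hi1⟩, ⟨n - 1, hi2⟩)
            ((∑ k ∈ Finset.Icc 1 m, (starRingEnd ℂ) (b k) • w ^ k)
              * (∑ l ∈ Finset.Icc 1 m, b l • z ^ l))
            = if m + 1 = n then (starRingEnd ℂ) (b (n - 1)) * b (n - 1) else 0 := by
          rw [hprod, lsum2]
          have hterm : ∀ k ∈ Finset.Icc 1 m, ∀ l ∈ Finset.Icc 1 m,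
              ((starRingEnd ℂ) (b k) * b l) * ℓ (⟨n - 1, hi1⟩, ⟨n - 1, hi2⟩) (w ^ k * z ^ l)
                = if l = n - 1 then (if k = n - 1 then (starRingEnd ℂ) (b k) * b l else 0)
                    else 0 := by
            intro k hk l hl
            rw [Finset.mem_Icc] at hk hl
            rw [show w ^ k * z ^ l = z ^ l * w ^ k from mul_comm _ _,
              hℓB2 (n - 1) (n - 1) hi1 hi2 l k (by omega) (by omega)]
            by_cases hkc : k = n - 1 <;> by_cases hlc : l = n - 1 <;>
              simp [hkc, hlc] <;> omega
          rw [Finset.sum_congr rfl fun k hk => Finset.sum_congr rfl fun l hl =>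
            hterm k hk l hl]
          rw [Finset.sum_congr rfl fun k (_ : k ∈ Finset.Icc 1 m) =>
            hIccsum (fun l => if k = n - 1 then (starRingEnd ℂ) (b k) * b l else 0)]
          by_cases hmc : m + 1 = n
          · simp only [if_pos hmc]
            rw [hIccsum (fun k => (starRingEnd ℂ) (b k) * b (n - 1)), if_pos hmc]
          · simp only [if_neg hmc, Finset.sum_const_zero]
        have e12 : ℓ (⟨n - 1, hi1⟩, ⟨n - 1, hi2⟩)
            ((∑ k ∈ Finset.Icc 1 m, (starRingEnd ℂ) (b k) • w ^ k)
              * (∑ l ∈ Finset.range n, a l • w ^ l)) = 0 := by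
          rw [hprod, lsum2]
          refine Finset.sum_eq_zero fun k hk => Finset.sum_eq_zero fun l hl => ?_
          rw [Finset.mem_Icc] at hk
          rw [Finset.mem_range] at hl
          rw [show w ^ k * w ^ l = w ^ (k + l) from (pow_add w k l).symm,
            hℓw (n - 1) (n - 1) hi1 hi2 rfl (k + l) (by omega) (by omega),
            if_neg (by omega), mul_zero]
        have e21 : ℓ (⟨n - 1, hi1⟩, ⟨n - 1, hi2⟩)
            ((∑ k ∈ Finset.range n, (starRingEnd ℂ) (a k) • z ^ k)
              * (∑ l ∈ Finset.Icc 1 m, b l • z ^ l)) = 0 := by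
          rw [hprod, lsum2]
          refine Finset.sum_eq_zero fun k hk => Finset.sum_eq_zero fun l hl => ?_
          rw [Finset.mem_range] at hk
          rw [Finset.mem_Icc] at hl
          rw [show z ^ k * z ^ l = z ^ (k + l) from (pow_add z k l).symm,
            hℓz (n - 1) (n - 1) hi1 hi2 rfl (k + l) (by omega) (by omega),
            if_neg (by omega), mul_zero]
        have e22 : ℓ (⟨n - 1, hi1⟩, ⟨n - 1, hi2⟩)
            ((∑ k ∈ Finset.range n, (starRingEnd ℂ) (a k) • z ^ k)
              * (∑ l ∈ Finset.range n, a l • w ^ l))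
            = (starRingEnd ℂ) (a (n - 1)) * a (n - 1) := by
          rw [hprod, lsum2]
          have hterm : ∀ k ∈ Finset.range n, ∀ l ∈ Finset.range n,
              ((starRingEnd ℂ) (a k) * a l) * ℓ (⟨n - 1, hi1⟩, ⟨n - 1, hi2⟩) (z ^ k * w ^ l)
                = if l = n - 1 then (if k = n - 1 then (starRingEnd ℂ) (a k) * a l else 0)
                    else 0 := by
            intro k hk l hl
            rw [Finset.mem_range] at hk hl
            rw [hℓB2 (n - 1) (n - 1) hi1 hi2 k l hk hl]
            by_cases hkc : k = n - 1 <;> by_cases hlc : l = n - 1 <;>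
              simp [hkc, hlc] <;> omega
          rw [Finset.sum_congr rfl fun k hk => Finset.sum_congr rfl fun l hl =>
            hterm k hk l hl]
          rw [Finset.sum_congr rfl fun k (_ : k ∈ Finset.range n) =>
            hrangesum (fun l => if k = n - 1 then (starRingEnd ℂ) (a k) * a l else 0)]
          rw [hrangesum (fun k => (starRingEnd ℂ) (a k) * a (n - 1))]
        rw [e11, e12, e21, e22, if_pos rfl, if_pos rfl, hCa, hCb]
        by_cases hmc : m + 1 = n
        · rw [if_pos hmc, if_pos hmc]
          rw [hconj, hconj]
          ring
        · rw [if_neg hmc, if_neg hmc]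
          rw [hconj]
          ring
      · -- edge case i1 = n-1, i2 + 1 < n : ℓ (z^n * w^(i2+1))
        rw [hmul, show n - 1 + 1 = n by omega]
        have hx : z ^ n * w ^ (i2 + 1)
            = -(∑ k ∈ Finset.Icc 1 m, (starRingEnd ℂ) (b k) • w ^ (k + (i2 + 1)))
              - ∑ k ∈ Finset.range n, (starRingEnd ℂ) (a k) • (z ^ k * w ^ (i2 + 1)) := by
          rw [rel2, sub_mul, neg_mul, Finset.sum_mul, Finset.sum_mul]
          congr 1
          · rw [neg_inj]
            exact Finset.sum_congr rfl fun k _ => by rw [smul_mul_assoc, ← pow_add]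
          · exact Finset.sum_congr rfl fun k _ => by rw [smul_mul_assoc]
        rw [hx, map_sub, map_neg, map_sum, map_sum]
        have hfirst : ∀ k ∈ Finset.Icc 1 m,
            ℓ (⟨n - 1, hi1⟩, ⟨i2, hi2⟩) ((starRingEnd ℂ) (b k) • w ^ (k + (i2 + 1)))
              = if k = n - 1 then (starRingEnd ℂ) (b k) * cW else 0 := by
          intro k hk
          rw [Finset.mem_Icc] at hk
          rw [map_smul, smul_eq_mul,
            hℓw (n - 1) i2 hi1 hi2 rfl (k + (i2 + 1)) (by omega) (by omega)]
          by_cases hkc : k = n - 1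
          · rw [if_pos (by omega), if_pos hkc]
          · rw [if_neg (by omega), if_neg hkc, mul_zero]
        have hsecond : ∀ k ∈ Finset.range n,
            ℓ (⟨n - 1, hi1⟩, ⟨i2, hi2⟩) ((starRingEnd ℂ) (a k) • (z ^ k * w ^ (i2 + 1))) = 0 := by
          intro k hk
          rw [Finset.mem_range] at hk
          rw [map_smul, smul_eq_mul, hℓB2 (n - 1) i2 hi1 hi2 k (i2 + 1) hk (by omega),
            if_neg (by omega), mul_zero]
        rw [Finset.sum_congr rfl hfirst, Finset.sum_eq_zero hsecond,
          hIccsum (fun k => (starRingEnd ℂ) (b k) * cW), sub_zero,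
          if_pos (show (n - 1 : ℕ) = n - 1 from rfl),
          if_neg (show ¬ i2 = n - 1 from by omega), hCb, hcW]
        by_cases hmc : m + 1 = n
        · simp only [if_pos hmc]
          rw [← hconj (b (n - 1))]
          ring
        · simp only [if_neg hmc]
          simp
    · by_cases h2c : i2 + 1 = n
      · -- edge case i1 + 1 < n, i2 = n-1 : ℓ (z^(i1+1) * w^n)
        have hi2v : i2 = n - 1 := by omega
        subst hi2v
        rw [hmul, show n - 1 + 1 = n by omega]
        have hx : z ^ (i1 + 1) * w ^ n
            = -(∑ k ∈ Finset.Icc 1 m, b k • z ^ (i1 + 1 + k))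
              - ∑ k ∈ Finset.range n, a k • (z ^ (i1 + 1) * w ^ k) := by
          rw [rel1, mul_sub, mul_neg, Finset.mul_sum, Finset.mul_sum]
          congr 1
          · rw [neg_inj]
            exact Finset.sum_congr rfl fun k _ => by rw [mul_smul_comm, ← pow_add]
          · exact Finset.sum_congr rfl fun k _ => by rw [mul_smul_comm]
        rw [hx, map_sub, map_neg, map_sum, map_sum]
        have hfirst : ∀ k ∈ Finset.Icc 1 m,
            ℓ (⟨i1, hi1⟩, ⟨n - 1, hi2⟩) (b k • z ^ (i1 + 1 + k))
              = if k = n - 1 then b k * cZ else 0 := by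
          intro k hk
          rw [Finset.mem_Icc] at hk
          rw [map_smul, smul_eq_mul,
            hℓz i1 (n - 1) hi1 hi2 rfl (i1 + 1 + k) (by omega) (by omega)]
          by_cases hkc : k = n - 1
          · rw [if_pos (by omega), if_pos hkc]
          · rw [if_neg (by omega), if_neg hkc, mul_zero]
        have hsecond : ∀ k ∈ Finset.range n,
            ℓ (⟨i1, hi1⟩, ⟨n - 1, hi2⟩) (a k • (z ^ (i1 + 1) * w ^ k)) = 0 := by
          intro k hk
          rw [Finset.mem_range] at hk
          rw [map_smul, smul_eq_mul, hℓB2 i1 (n - 1) hi1 hi2 (i1 + 1) k (by omega) hk,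
            if_neg (by omega), mul_zero]
        rw [Finset.sum_congr rfl hfirst, Finset.sum_eq_zero hsecond,
          hIccsum (fun k => b k * cZ), sub_zero,
          if_neg (show ¬ i1 = n - 1 from by omega),
          if_pos (show (n - 1 : ℕ) = n - 1 from rfl), hCb, hcZ]
        by_cases hmc : m + 1 = n
        · simp only [if_pos hmc]
          rw [← hconj (b (n - 1))]
          ring
        · simp only [if_neg hmc]
          simp
      · -- generic case : both i1+1 < n and i2+1 < n
        rw [hmul, hℓB2 i1 i2 hi1 hi2 (i1 + 1) (i2 + 1) (by omega) (by omega),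
          if_neg (by omega), if_neg (by omega), if_neg (by omega)]
  have hFinsum : ∀ (u v : ℂ), ∑ y : Fin n, (if (y : ℕ) = n - 1 then u else v)
      = u + ((n - 1 : ℕ) : ℂ) * v := by
    intro u v
    have hy : ∀ y : Fin n, (if (y : ℕ) = n - 1 then u else v)
        = v + (if y = (⟨n - 1, hlast⟩ : Fin n) then u - v else 0) := by
      intro y
      by_cases hc : y = (⟨n - 1, hlast⟩ : Fin n)
      · rw [if_pos (by rw [hc]), if_pos hc]; ring
      · rw [if_neg (fun hv => hc (Fin.ext hv)), if_neg hc]; ring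
    rw [Finset.sum_congr rfl fun y _ => hy y, Finset.sum_add_distrib, Finset.sum_const,
      Finset.sum_ite_eq' Finset.univ (⟨n - 1, hlast⟩ : Fin n) (fun _ => u - v),
      if_pos (Finset.mem_univ _), Finset.card_univ, Fintype.card_fin, nsmul_eq_mul,
      Nat.cast_sub (by omega : 1 ≤ n), Nat.cast_one]
    ring
  have htrace : LinearMap.trace ℂ A (LinearMap.mulLeft ℂ (z * w))
      = Ca + (2 * (n : ℂ) - 1) * Cb := by
    rw [LinearMap.trace_eq_matrix_trace ℂ B, Matrix.trace]
    have hentry : ∀ p : Fin n × Fin n,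
        (LinearMap.toMatrix B B (LinearMap.mulLeft ℂ (z * w))).diag p
          = (if (p.1 : ℕ) = n - 1 then (if (p.2 : ℕ) = n - 1 then Ca + Cb else Cb)
              else (if (p.2 : ℕ) = n - 1 then Cb else 0)) := by
      intro p
      have hp : (LinearMap.toMatrix B B (LinearMap.mulLeft ℂ (z * w))).diag p
          = ℓ p ((z * w) * B p) := by
        rw [Matrix.diag, LinearMap.toMatrix_apply, LinearMap.mulLeft_apply, hℓ]
      rw [hp]
      obtain ⟨⟨i1, hi1⟩, ⟨i2, hi2⟩⟩ := p
      exact diag i1 i2 hi1 hi2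
    rw [Finset.sum_congr rfl fun p _ => hentry p, Fintype.sum_prod_type]
    have hinner : ∀ x : Fin n,
        (∑ y : Fin n, (if (x : ℕ) = n - 1 then (if (y : ℕ) = n - 1 then Ca + Cb else Cb)
            else (if (y : ℕ) = n - 1 then Cb else 0)))
          = if (x : ℕ) = n - 1 then (Ca + Cb) + ((n - 1 : ℕ) : ℂ) * Cb else Cb := by
      intro x
      by_cases hx : (x : ℕ) = n - 1
      · simp only [if_pos hx]
        rw [hFinsum]
      · simp only [if_neg hx]
        rw [hFinsum Cb 0]
        ring
    rw [Finset.sum_congr rfl fun x _ => hinner x,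
      hFinsum ((Ca + Cb) + ((n - 1 : ℕ) : ℂ) * Cb) Cb,
      Nat.cast_sub (by omega : 1 ≤ n), Nat.cast_one]
    ring
  rw [htrace, hCa, hCb]

/-- **Lemma (trace of M_{zw}).**
With `h(z,w) = q(z) + p(w)` and `h*(z,w) = q̄(w) + p̄(z)` where
`q(z) = b_m z^m + ⋯ + b_1 z` and `p(w) = w^n + a_{n-1} w^{n-1} + ⋯ + a_0`,
`Ĩ = ⟨h, h*⟩`, and assuming the classes of `z^α w^β` (`0 ≤ α, β ≤ n-1`) form a basis of
`A = ℂ[z,w]/Ĩ`, one has `Tr(M_{zw}) = |a_{n-1}|² + (2n-1)|b_{n-1}|²` if `m = n-1` and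
`Tr(M_{zw}) = |a_{n-1}|²` if `m ≤ n-2`. Here `z = X 0`, `w = X 1`. -/
theorem statement2 (n m : ℕ) (hn : 2 ≤ n) (hm1 : 1 ≤ m) (hmn : m ≤ n - 1)
    (a b : ℕ → ℂ)
    (h hstar : MvPolynomial (Fin 2) ℂ)
    (hh : h = (∑ j ∈ Finset.Icc 1 m, C (b j) * X (0 : Fin 2) ^ j) +
      (X (1 : Fin 2) ^ n + ∑ j ∈ Finset.range n, C (a j) * X (1 : Fin 2) ^ j))
    (hhs : hstar = (∑ j ∈ Finset.Icc 1 m, C (starRingEnd ℂ (b j)) * X (1 : Fin 2) ^ j) +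
      (X (0 : Fin 2) ^ n + ∑ j ∈ Finset.range n, C (starRingEnd ℂ (a j)) * X (0 : Fin 2) ^ j))
    (I : Ideal (MvPolynomial (Fin 2) ℂ)) (hI : I = Ideal.span {h, hstar})
    (B : Module.Basis (Fin n × Fin n) ℂ (MvPolynomial (Fin 2) ℂ ⧸ I))
    (hB : ∀ αβ : Fin n × Fin n,
      B αβ = Ideal.Quotient.mk I (X 0 ^ (αβ.1 : ℕ) * X 1 ^ (αβ.2 : ℕ))) :
    (m = n - 1 →
      LinearMap.trace ℂ (MvPolynomial (Fin 2) ℂ ⧸ I)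
          (LinearMap.mulLeft ℂ (Ideal.Quotient.mk I (X 0 * X 1))) =
        (Complex.normSq (a (n - 1)) : ℂ) +
          (2 * (n : ℂ) - 1) * (Complex.normSq (b (n - 1)) : ℂ)) ∧
    (m ≤ n - 2 →
      LinearMap.trace ℂ (MvPolynomial (Fin 2) ℂ ⧸ I)
          (LinearMap.mulLeft ℂ (Ideal.Quotient.mk I (X 0 * X 1))) =
        (Complex.normSq (a (n - 1)) : ℂ)) := by
  obtain ⟨z, hzdef⟩ : ∃ z, z = Ideal.Quotient.mk I (X (0 : Fin 2)) := ⟨_, rfl⟩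
  obtain ⟨w, hwdef⟩ : ∃ w, w = Ideal.Quotient.mk I (X (1 : Fin 2)) := ⟨_, rfl⟩
  have hsmul : ∀ (c : ℂ) (p : MvPolynomial (Fin 2) ℂ),
      Ideal.Quotient.mk I (C c * p) = c • Ideal.Quotient.mk I p := by
    intro c p
    rw [← smul_eq_C_mul, ← Ideal.Quotient.mkₐ_eq_mk ℂ I, map_smul]
  have hB' : ∀ i : Fin n × Fin n, B i = z ^ (i.1 : ℕ) * w ^ (i.2 : ℕ) := by
    intro i; rw [hB, map_mul, map_pow, map_pow, ← hzdef, ← hwdef]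
  have hh0 : Ideal.Quotient.mk I h = 0 := by
    rw [Ideal.Quotient.eq_zero_iff_mem, hI]
    exact Ideal.subset_span (by simp)
  have hhs0 : Ideal.Quotient.mk I hstar = 0 := by
    rw [Ideal.Quotient.eq_zero_iff_mem, hI]
    exact Ideal.subset_span (by simp)
  have rel1 : w ^ n = -∑ j ∈ Finset.Icc 1 m, b j • z ^ j
      - ∑ j ∈ Finset.range n, a j • w ^ j := by
    have h0 := hh0
    rw [hh] at h0
    simp only [map_add, map_sum, hsmul, map_pow, ← hzdef, ← hwdef] at h0
    linear_combination h0
  have rel2 : z ^ n = -∑ j ∈ Finset.Icc 1 m, (starRingEnd ℂ) (b j) • w ^ j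
      - ∑ j ∈ Finset.range n, (starRingEnd ℂ) (a j) • z ^ j := by
    have h0 := hhs0
    rw [hhs] at h0
    simp only [map_add, map_sum, hsmul, map_pow, ← hzdef, ← hwdef] at h0
    linear_combination h0
  have key := main_aux n m hn hm1 hmn a b z w rel1 rel2 B hB'
  have hzw : Ideal.Quotient.mk I (X (0 : Fin 2) * X 1) = z * w := by
    rw [map_mul, ← hzdef, ← hwdef]
  constructor
  · intro hm
    have hm' : m + 1 = n := by omega
    rw [hzw, key, if_pos hm']
  · intro hm
    have hm' : ¬(m + 1 = n) := by omega
    rw [hzw, key, if_neg hm']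
    ring
end

section
/- Let n ≥ 2 and a, b ∈ ℂ. The equation z^n + a·(conj z)^n + b = 0 has exactly n solutions z ∈ ℂ if and only if |a| ≠ 1 and b ≠ 0; moreover, if |a| ≠ 1 and b = 0, then the only solution is z = 0. -/
open Complex Polynomial

lemma roots_card_aux (n : ℕ) (hn : 0 < n) (c : ℂ) (hc : c ≠ 0) :
    {z : ℂ | z ^ n = c}.Finite ∧ {z : ℂ | z ^ n = c}.ncard = n := by
  have hζ := Complex.isPrimitiveRoot_exp n hn.ne'
  have hset : {z : ℂ | z ^ n = c} = ↑(nthRoots n c).toFinset := by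
    ext z
    simp [Polynomial.mem_nthRoots hn]
  rw [hset]
  refine ⟨(nthRoots n c).toFinset.finite_toSet, ?_⟩
  rw [Set.ncard_coe_finset, Multiset.toFinset_card_of_nodup (hζ.nthRoots_nodup hc),
    hζ.card_nthRoots, if_pos (IsAlgClosed.exists_pow_nat_eq c hn)]

/-- **Proposition (the family `z^n + a·conj(z)^n + b = 0`).**
For `n ≥ 2`, the equation has exactly `n` solutions iff `|a| ≠ 1` and `b ≠ 0`; moreover,
if `|a| ≠ 1` and `b = 0` then the only solution is `z = 0`. -/
theorem statement5 (n : ℕ) (hn : 2 ≤ n) (a b : ℂ) :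
    (({z : ℂ | z ^ n + a * (starRingEnd ℂ z) ^ n + b = 0}.Finite ∧
        {z : ℂ | z ^ n + a * (starRingEnd ℂ z) ^ n + b = 0}.ncard = n) ↔
      (‖a‖ ≠ 1 ∧ b ≠ 0)) ∧
    (‖a‖ ≠ 1 → b = 0 →
      {z : ℂ | z ^ n + a * (starRingEnd ℂ z) ^ n + b = 0} = {0}) := by
  have hn0 : 0 < n := by omega
  set S := {z : ℂ | z ^ n + a * (starRingEnd ℂ z) ^ n + b = 0} with hS
  -- Part: |a| ≠ 1 and b = 0 implies only solution 0
  have hzero : ‖a‖ ≠ 1 → b = 0 → S = {0} := by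
    intro ha hb
    ext z
    simp only [hS, Set.mem_setOf_eq, hb, add_zero, Set.mem_singleton_iff]
    constructor
    · intro h
      by_contra hz
      have h2 : z ^ n = -(a * (starRingEnd ℂ z) ^ n) := by linear_combination h
      have h1 : ‖a‖ * ‖z‖ ^ n = ‖z‖ ^ n := by
        have := congrArg (‖·‖) h2
        rw [norm_neg, norm_pow, norm_mul, norm_pow, Complex.norm_conj] at this
        linarith
      rcases mul_left_eq_self₀.mp h1 with h3 | h3
      · exact ha h3
      · exact hz (by
          have : ‖z‖ = 0 := pow_eq_zero_iff hn0.ne' |>.mp h3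
          simpa using norm_eq_zero.mp this)
    · rintro rfl
      simp [zero_pow hn0.ne']
  -- Part: |a| = 1 implies failure
  have hone : ‖a‖ = 1 → ¬ (S.Finite ∧ S.ncard = n) := by
    intro ha
    by_cases hs : ∃ s : ℂ, s + a * (starRingEnd ℂ) s + b = 0
    · -- infinitely many solutions
      obtain ⟨s, hsb⟩ := hs
      obtain ⟨w, hw⟩ := IsAlgClosed.exists_pow_nat_eq a (n := 2) two_pos
      have hnsq : Complex.normSq w = 1 := by
        have h1 : ‖w‖ ^ 2 = 1 := by
          rw [← norm_pow, hw, ha]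
        rw [Complex.sq_norm] at h1
        exact h1
      have hw1 : w * (starRingEnd ℂ) w = 1 := by
        rw [Complex.mul_conj, hnsq, Complex.ofReal_one]
      have hw0 : w ≠ 0 := by
        intro h
        rw [h, zero_mul] at hw1
        exact zero_ne_one hw1
      have haw : a * (starRingEnd ℂ) w = w := by
        rw [← hw]
        linear_combination w * hw1
      have hroot : ∀ t : ℝ, ∃ z : ℂ, z ^ n = s + (t : ℂ) * I * w := fun t =>
        IsAlgClosed.exists_pow_nat_eq _ hn0
      choose f hf using hroot
      have hIw : I * w ≠ 0 := mul_ne_zero I_ne_zero hw0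
      have hinj : Function.Injective f := by
        intro t₁ t₂ h
        have h1 : s + (t₁ : ℂ) * I * w = s + (t₂ : ℂ) * I * w := by
          rw [← hf t₁, ← hf t₂, h]
        have h3 : ((t₁ : ℂ) - t₂) * (I * w) = 0 := by linear_combination h1
        rcases mul_eq_zero.mp h3 with h4 | h4
        · exact_mod_cast sub_eq_zero.mp h4
        · exact absurd h4 hIw
      have hmem : ∀ t : ℝ, f t ∈ S := by
        intro t
        have h1 : (f t) ^ n = s + (t : ℂ) * I * w := hf t
        have h2 : ((starRingEnd ℂ) (f t)) ^ n
            = (starRingEnd ℂ) s + (t : ℂ) * (-I) * (starRingEnd ℂ) w := by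
          rw [← map_pow, h1]
          simp only [map_add, map_mul, Complex.conj_ofReal, Complex.conj_I]
        simp only [hS, Set.mem_setOf_eq]
        rw [h1, h2]
        linear_combination hsb - (t : ℂ) * I * haw
      rintro ⟨hfin, -⟩
      exact (Set.infinite_of_injective_forall_mem hinj hmem) hfin
    · -- no solutions
      rintro ⟨hfin, hcard⟩
      have hempty : S = ∅ := by
        ext z
        simp only [hS, Set.mem_setOf_eq, Set.mem_empty_iff_false, iff_false]
        intro h
        exact hs ⟨z ^ n, by rw [map_pow]; exact h⟩
      rw [hempty, Set.ncard_empty] at hcard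
      omega
  -- Part: |a| ≠ 1 and b ≠ 0 implies exactly n solutions
  have hmain : ‖a‖ ≠ 1 → b ≠ 0 → S.Finite ∧ S.ncard = n := by
    intro ha hb
    have hd : 1 - a * (starRingEnd ℂ) a ≠ 0 := by
      intro h
      apply ha
      have h1 : a * (starRingEnd ℂ) a = 1 := by linear_combination -h
      rw [Complex.mul_conj] at h1
      have h2 : Complex.normSq a = 1 := by exact_mod_cast h1
      rw [Complex.norm_def, h2, Real.sqrt_one]
    set c : ℂ := (a * (starRingEnd ℂ) b - b) / (1 - a * (starRingEnd ℂ) a) with hc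
    have hc0 : c ≠ 0 := by
      rw [hc, div_ne_zero_iff]
      refine ⟨?_, hd⟩
      intro h
      have hab : a * (starRingEnd ℂ) b = b := by linear_combination h
      have h1 : ‖a‖ * ‖b‖ = ‖b‖ := by
        have := congrArg (‖·‖) hab
        rwa [norm_mul, Complex.norm_conj] at this
      rcases mul_left_eq_self₀.mp h1 with h2 | h2
      · exact ha h2
      · exact hb (by simpa using norm_eq_zero.mp h2)
    have hmul : c * (1 - a * (starRingEnd ℂ) a) = a * (starRingEnd ℂ) b - b := by
      rw [hc, div_mul_cancel₀ _ hd]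
    have hmulc : (starRingEnd ℂ) c * (1 - (starRingEnd ℂ) a * a)
        = (starRingEnd ℂ) a * b - (starRingEnd ℂ) b := by
      have := congrArg (starRingEnd ℂ) hmul
      simpa only [map_mul, map_sub, map_one, Complex.conj_conj] using this
    have key : c + a * (starRingEnd ℂ) c + b = 0 := by
      have h3 : (c + a * (starRingEnd ℂ) c + b) * (1 - a * (starRingEnd ℂ) a) = 0 := by
        linear_combination hmul + a * hmulc
      exact (mul_eq_zero.mp h3).resolve_right hd
    have hSeq : S = {z : ℂ | z ^ n = c} := by
      ext z
      simp only [hS, Set.mem_setOf_eq]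
      constructor
      · intro h
        have hconj : ((starRingEnd ℂ) z) ^ n + (starRingEnd ℂ) a * z ^ n
            + (starRingEnd ℂ) b = 0 := by
          have := congrArg (starRingEnd ℂ) h
          simpa only [map_add, map_mul, map_pow, map_zero, Complex.conj_conj] using this
        rw [hc, eq_div_iff hd]
        linear_combination h - a * hconj
      · intro h
        have hconj : ((starRingEnd ℂ) z) ^ n = (starRingEnd ℂ) c := by
          rw [← map_pow, h]
        rw [h, hconj]
        exact key
    rw [hSeq]
    exact roots_card_aux n hn0 c hc0
  refine ⟨⟨fun h => ?_, fun ⟨ha, hb⟩ => hmain ha hb⟩, hzero⟩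
  constructor
  · intro ha
    exact hone ha h
  · intro hb
    rcases eq_or_ne ‖a‖ 1 with ha | ha
    · exact hone ha h
    · obtain ⟨hfin, hcard⟩ := h
      rw [hzero ha hb, Set.ncard_singleton] at hcard
      omega
end

section
/- Let n ≥ 1 and a, b ∈ ℂ with |a| = 1. Then the set of solutions z ∈ ℂ of the equation z^n + a·(conj z)^n + b = 0 is infinite if there exists a real number s ≥ 0 with b² = s·a (equivalently, b/√a ∈ ℝ), and is empty otherwise. -/
open Complex

/-- **Proposition (the family `z^n + a·conj(z)^n + b = 0`, `|a| = 1`).**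
For `n ≥ 1` and `|a| = 1`, the solution set is infinite when `b² = s·a` for some real
`s ≥ 0` (i.e. `b/√a ∈ ℝ`), and empty otherwise. -/
theorem statement6 (n : ℕ) (hn : 1 ≤ n) (a b : ℂ) (ha : ‖a‖ = 1) :
    ((∃ s : ℝ, 0 ≤ s ∧ b ^ 2 = (s : ℂ) * a) →
      {z : ℂ | z ^ n + a * (starRingEnd ℂ z) ^ n + b = 0}.Infinite) ∧
    (¬(∃ s : ℝ, 0 ≤ s ∧ b ^ 2 = (s : ℂ) * a) →
      {z : ℂ | z ^ n + a * (starRingEnd ℂ z) ^ n + b = 0} = ∅) := by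
  set u : ℂ := Complex.exp (((a.arg / 2 : ℝ) : ℂ) * I) with hu
  have hu2 : u * u = a := by
    rw [hu, ← Complex.exp_add]
    have h1 : ((a.arg / 2 : ℝ) : ℂ) * I + ((a.arg / 2 : ℝ) : ℂ) * I = (a.arg : ℂ) * I := by
      push_cast; ring
    rw [h1]
    have h2 := Complex.norm_mul_exp_arg_mul_I a
    rw [ha] at h2; simpa using h2
  have hu0 : u ≠ 0 := Complex.exp_ne_zero _
  have huc : (starRingEnd ℂ) u * u = 1 := by
    rw [mul_comm, Complex.mul_conj]
    norm_cast
    rw [Complex.normSq_eq_norm_sq, hu]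
    simp [Complex.norm_exp]
  have haa : a * (starRingEnd ℂ) a = 1 := by
    rw [Complex.mul_conj]
    norm_cast
    rw [Complex.normSq_eq_norm_sq, ha]; norm_num
  -- key equivalence
  have key : (∃ s : ℝ, 0 ≤ s ∧ b ^ 2 = (s : ℂ) * a) ↔ a * (starRingEnd ℂ) b = b := by
    constructor
    · rintro ⟨s, hs, hb⟩
      set c : ℂ := b * (starRingEnd ℂ) u with hc
      have hcu : c * u = b := by rw [hc, mul_assoc, huc, mul_one]
      have hc2 : c ^ 2 = (s : ℂ) := by
        have hmul : c ^ 2 * a = (s : ℂ) * a := by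
          calc c ^ 2 * a = b ^ 2 * (((starRingEnd ℂ) u * u) * ((starRingEnd ℂ) u * u)) := by
                rw [hc, ← hu2]; ring
            _ = b ^ 2 := by rw [huc]; ring
            _ = (s : ℂ) * a := hb
        have ha0 : a ≠ 0 := by intro h; rw [h] at ha; simp at ha
        exact mul_right_cancel₀ ha0 hmul
      have hcim : c.im = 0 := by
        by_contra him
        have hre : c.re = 0 := by
          have h1 : (c ^ 2).im = 0 := by rw [hc2]; simp
          have h2 : (c ^ 2).im = 2 * c.re * c.im := by rw [sq, Complex.mul_im]; ring
          rw [h2] at h1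
          rcases mul_eq_zero.1 h1 with h | h
          · rcases mul_eq_zero.1 h with h' | h'
            · norm_num at h'
            · exact h'
          · exact absurd h him
        have h2 : (c ^ 2).re = s := by rw [hc2]; simp
        have h3 : (c ^ 2).re = c.re * c.re - c.im * c.im := by rw [sq, Complex.mul_re]
        rw [h3, hre] at h2
        nlinarith [mul_self_pos.2 him]
      have hcc : (starRingEnd ℂ) c = c := Complex.conj_eq_iff_im.2 hcim
      have hconjb2 : (starRingEnd ℂ) b = (starRingEnd ℂ) c * (starRingEnd ℂ) u := by
        rw [← hcu, map_mul]
      rw [hconjb2, hcc, ← hu2]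
      rw [← hcu]
      linear_combination (c * u) * huc
    · intro hab
      set c : ℂ := b * (starRingEnd ℂ) u with hc
      have hcu : c * u = b := by rw [hc, mul_assoc, huc, mul_one]
      have hconjb : (starRingEnd ℂ) b = (starRingEnd ℂ) a * b := by
        linear_combination (starRingEnd ℂ) a * hab - (starRingEnd ℂ) b * haa
      have hcreal : (starRingEnd ℂ) c = c := by
        rw [hc, map_mul, Complex.conj_conj, hconjb, ← hu2, map_mul]
        linear_combination (b * (starRingEnd ℂ) u) * huc
      have hcim : c.im = 0 := Complex.conj_eq_iff_im.1 hcreal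
      have hcre : c = ((c.re : ℝ) : ℂ) := (Complex.conj_eq_iff_re.1 hcreal).symm
      refine ⟨c.re ^ 2, sq_nonneg _, ?_⟩
      calc b ^ 2 = c ^ 2 * a := by rw [← hcu, ← hu2]; ring
        _ = ((c.re : ℂ)) ^ 2 * a := by conv_lhs => rw [hcre]
        _ = (((c.re ^ 2 : ℝ)) : ℂ) * a := by push_cast; ring
  constructor
  · intro hb
    have hab : a * (starRingEnd ℂ) b = b := key.1 hb
    have hiu : I * u ≠ 0 := mul_ne_zero I_ne_zero hu0
    have hex : ∀ t : ℝ, ∃ z : ℂ, z ^ n = -b / 2 + I * u * t :=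
      fun t => IsAlgClosed.exists_pow_nat_eq _ (by omega)
    choose f hf using hex
    apply Set.infinite_of_injective_forall_mem (f := f)
    · intro t t' htt
      have h1 : -b / 2 + I * u * t = -b / 2 + I * u * t' := by rw [← hf t, ← hf t', htt]
      have h2 : I * u * t = I * u * t' := by linear_combination h1
      have h3 := mul_left_cancel₀ hiu h2
      exact_mod_cast h3
    · intro t
      show f t ^ n + a * (starRingEnd ℂ) (f t) ^ n + b = 0
      rw [← map_pow, hf t]
      have hcw : (starRingEnd ℂ) (-b / 2 + I * u * (t : ℂ)) =
          -(starRingEnd ℂ) b / 2 - I * (starRingEnd ℂ) u * t := by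
        simp [map_add, map_mul, map_div₀, map_ofNat, Complex.conj_I, Complex.conj_ofReal]
        ring
      rw [hcw]
      have hau : a * ((starRingEnd ℂ) u) = u := by
        rw [← hu2, mul_assoc, mul_comm u ((starRingEnd ℂ) u), huc, mul_one]
      linear_combination (-(t : ℂ) * I) * hau - (1 / 2 : ℂ) * hab
  · intro hnb
    rw [Set.eq_empty_iff_forall_notMem]
    intro z hz
    apply hnb
    apply key.2
    simp only [Set.mem_setOf_eq] at hz
    have hb : b = -(z ^ n + a * (starRingEnd ℂ) z ^ n) := by linear_combination hz
    rw [hb]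
    simp only [map_neg, map_add, map_mul, map_pow, Complex.conj_conj]
    linear_combination (-(z ^ n : ℂ)) * haa
end

section
/- In the generalized setting, assume the quotient algebra A = ℂ[z,w]/Ĩ is finite-dimensional over ℂ, and let ξ ∈ ℂ[z,w] satisfy ξ = ξ*. Then for all f, g ∈ ℂ[z,w] one has Tr(M_{ξ·f·g*}) = conj( Tr(M_{ξ·g·f*}) ); in particular, the sesquilinear form (f, g) ↦ Tr(M_{ξ·f·g*}) on A is Hermitian. -/
open MvPolynomial

noncomputable section

/-- The `*` operation on `ℂ[z₁,…,z_r,w₁,…,w_r]`: conjugate every coefficient and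
exchange each variable `z_k` with `w_k` (variables `z` are indexed by `Sum.inl`,
variables `w` by `Sum.inr`). -/
def pstar {r : ℕ} (f : MvPolynomial (Fin r ⊕ Fin r) ℂ) : MvPolynomial (Fin r ⊕ Fin r) ℂ :=
  rename Sum.swap (map (starRingEnd ℂ) f)

/-- The ideal `Ĩ = ⟨p₁,…,p_c,p₁*,…,p_c*⟩`. -/
def tildeI {r c : ℕ} (p : Fin c → MvPolynomial (Fin r ⊕ Fin r) ℂ) :
    Ideal (MvPolynomial (Fin r ⊕ Fin r) ℂ) :=
  Ideal.span (Set.range p ∪ Set.range fun k => pstar (p k))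

/-- `Tr(M_f)`: the trace of multiplication by the class of `f` on `A = ℂ[z,w]/Ĩ`. -/
def traceM {r c : ℕ} (p : Fin c → MvPolynomial (Fin r ⊕ Fin r) ℂ)
    (f : MvPolynomial (Fin r ⊕ Fin r) ℂ) : ℂ :=
  LinearMap.trace ℂ (MvPolynomial (Fin r ⊕ Fin r) ℂ ⧸ tildeI p)
    (LinearMap.mulLeft ℂ (Ideal.Quotient.mk (tildeI p) f))

namespace Stmt10Aux

abbrev P (r : ℕ) := MvPolynomial (Fin r ⊕ Fin r) ℂ

/-- `pstar` as a ring homomorphism. -/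
def pstarHom (r : ℕ) : P r →+* P r :=
  (rename (Sum.swap : Fin r ⊕ Fin r → Fin r ⊕ Fin r)).toRingHom.comp
    (MvPolynomial.map (starRingEnd ℂ))

lemma pstarHom_apply {r : ℕ} (f : P r) : pstarHom r f = pstar f := rfl

lemma pstar_pstar {r : ℕ} (f : P r) : pstar (pstar f) = f := by
  unfold pstar
  have h1 : (Sum.swap ∘ Sum.swap : Fin r ⊕ Fin r → Fin r ⊕ Fin r) = id := by
    funext x; simp
  have h2 : (starRingEnd ℂ).comp (starRingEnd ℂ) = RingHom.id ℂ := by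
    ext x; simp
  rw [← map_rename, rename_rename, h1, rename_id, AlgHom.id_apply, map_map, h2, map_id]

lemma pstar_mul {r : ℕ} (f g : P r) : pstar (f * g) = pstar f * pstar g :=
  map_mul (pstarHom r) f g

lemma pstar_C_mul {r : ℕ} (a : ℂ) (f : P r) :
    pstar (C a * f) = C (starRingEnd ℂ a) * pstar f := by
  rw [pstar_mul]
  congr 1
  unfold pstar
  rw [map_C, rename_C]

variable {r c : ℕ} (p : Fin c → P r)

lemma pstar_smul (a : ℂ) (q : P r) : pstar (a • q) = (starRingEnd ℂ a) • pstar q := by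
  rw [smul_eq_C_mul, smul_eq_C_mul, pstar_C_mul]

lemma mk_smul (a : ℂ) (q : P r) :
    Ideal.Quotient.mk (tildeI p) (a • q) = a • Ideal.Quotient.mk (tildeI p) q := by
  rw [← Ideal.Quotient.mkₐ_eq_mk ℂ]
  exact map_smul _ a q

lemma pstar_mem {x : P r} (hx : x ∈ tildeI p) : pstar x ∈ tildeI p := by
  have hle : Ideal.map (pstarHom r) (tildeI p) ≤ tildeI p := by
    rw [tildeI, Ideal.map_span, Ideal.span_le]
    rintro y ⟨q, hq, rfl⟩
    rcases hq with ⟨k, rfl⟩ | ⟨k, rfl⟩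
    · exact Ideal.subset_span (Or.inr ⟨k, rfl⟩)
    · show pstar (pstar (p k)) ∈ tildeI p
      rw [pstar_pstar]
      exact Ideal.subset_span (Or.inl ⟨k, rfl⟩)
  exact hle (Ideal.mem_map_of_mem _ hx)

/-- The induced conjugation on the quotient. -/
def sigma : (P r ⧸ tildeI p) →+* (P r ⧸ tildeI p) :=
  Ideal.Quotient.lift (tildeI p) ((Ideal.Quotient.mk (tildeI p)).comp (pstarHom r))
    (fun a ha => by
      simp only [RingHom.comp_apply, pstarHom_apply]
      exact Ideal.Quotient.eq_zero_iff_mem.2 (pstar_mem p ha))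

lemma sigma_mk (q : P r) :
    sigma p (Ideal.Quotient.mk (tildeI p) q) = Ideal.Quotient.mk (tildeI p) (pstar q) :=
  Ideal.Quotient.lift_mk _ _ _

lemma sigma_sigma (x : P r ⧸ tildeI p) : sigma p (sigma p x) = x := by
  obtain ⟨q, rfl⟩ := Ideal.Quotient.mk_surjective x
  rw [sigma_mk, sigma_mk, pstar_pstar]

lemma sigma_smul (a : ℂ) (x : P r ⧸ tildeI p) :
    sigma p (a • x) = (starRingEnd ℂ a) • sigma p x := by
  obtain ⟨q, rfl⟩ := Ideal.Quotient.mk_surjective x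
  rw [← mk_smul, sigma_mk, pstar_smul, mk_smul, sigma_mk]

set_option maxHeartbeats 1000000 in
set_option synthInstance.maxHeartbeats 400000 in
lemma trace_pstar (hfd : FiniteDimensional ℂ (P r ⧸ tildeI p)) (h : P r) :
    traceM p (pstar h) = starRingEnd ℂ (traceM p h) := by
  classical
  haveI := hfd
  set A := P r ⧸ tildeI p
  let b : Module.Basis (Fin (Module.finrank ℂ A)) ℂ A := Module.finBasis ℂ A
  -- the conjugated basis
  let conjF : (Fin (Module.finrank ℂ A) →₀ ℂ) → (Fin (Module.finrank ℂ A) →₀ ℂ) :=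
    fun l => l.mapRange (starRingEnd ℂ) (map_zero _)
  have conjF_apply : ∀ l i, conjF l i = starRingEnd ℂ (l i) := fun l i =>
    Finsupp.mapRange_apply
  have conjF_conjF : ∀ l, conjF (conjF l) = l := by
    intro l; ext i; simp [conjF_apply]
  let repr' : A ≃ₗ[ℂ] (Fin (Module.finrank ℂ A) →₀ ℂ) :=
    { toFun := fun x => conjF (b.repr (sigma p x))
      invFun := fun l => sigma p (b.repr.symm (conjF l))
      map_add' := by intro x y; ext i; simp [conjF_apply]
      map_smul' := by
        intro a x
        ext i
        simp only [conjF_apply, sigma_smul p, map_smul, Finsupp.smul_apply, smul_eq_mul,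
          map_mul, Complex.conj_conj, RingHom.id_apply]
      left_inv := by intro x; simp [conjF_conjF, sigma_sigma]
      right_inv := by intro l; simp [sigma_sigma, conjF_conjF] }
    
  let b' : Module.Basis (Fin (Module.finrank ℂ A)) ℂ A := Module.Basis.ofRepr repr'
  have hb' : ∀ i, b' i = sigma p (b i) := by
    intro i
    have hs : conjF (Finsupp.single i 1) = Finsupp.single i 1 := by
      ext j; simp [conjF_apply, Finsupp.single_apply, apply_ite (starRingEnd ℂ)]
    show sigma p (b.repr.symm (conjF (Finsupp.single i 1))) = _
    rw [hs, Module.Basis.repr_symm_single_one]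
  have hb'repr : ∀ (y : A) i, b'.repr (sigma p y) i = starRingEnd ℂ (b.repr y i) := by
    intro y i
    show conjF (b.repr (sigma p (sigma p y))) i = _
    rw [sigma_sigma, conjF_apply]
  rw [traceM, traceM, LinearMap.trace_eq_matrix_trace ℂ b',
    LinearMap.trace_eq_matrix_trace ℂ b, Matrix.trace, Matrix.trace]
  rw [map_sum]
  congr 1
  funext i
  rw [Matrix.diag_apply, Matrix.diag_apply, LinearMap.toMatrix_apply, LinearMap.toMatrix_apply]
  rw [hb' i]
  have : (LinearMap.mulLeft ℂ (Ideal.Quotient.mk (tildeI p) (pstar h))) (sigma p (b i))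
      = sigma p ((LinearMap.mulLeft ℂ (Ideal.Quotient.mk (tildeI p) h)) (b i)) := by
    simp only [LinearMap.mulLeft_apply]
    rw [map_mul (sigma p), sigma_mk]
  rw [this, hb'repr]

end Stmt10Aux

/-- **Proposition (the Hermitian Killing form is Hermitian).**
If `A = ℂ[z,w]/Ĩ` is finite dimensional and `ξ = ξ*`, then for all `f, g`,
`Tr(M_{ξ·f·g*}) = conj (Tr(M_{ξ·g·f*}))`. -/
theorem statement10 {r c : ℕ} (hr : 1 ≤ r) (hc : 1 ≤ c)
    (p : Fin c → MvPolynomial (Fin r ⊕ Fin r) ℂ)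
    (hfd : FiniteDimensional ℂ (MvPolynomial (Fin r ⊕ Fin r) ℂ ⧸ tildeI p))
    (ξ : MvPolynomial (Fin r ⊕ Fin r) ℂ) (hξ : ξ = pstar ξ)
    (f g : MvPolynomial (Fin r ⊕ Fin r) ℂ) :
    traceM p (ξ * f * pstar g) = starRingEnd ℂ (traceM p (ξ * g * pstar f)) := by
  have key : ξ * f * pstar g = pstar (ξ * g * pstar f) := by
    rw [Stmt10Aux.pstar_mul, Stmt10Aux.pstar_mul, Stmt10Aux.pstar_pstar, ← hξ]
    ring
  rw [key, Stmt10Aux.trace_pstar p hfd _]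
end
end
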